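/- arXiv:2501.14489 — 6 statements merged into one kernel-verified Lean document; each statement's English description precedes it below -/
import Mathlib

section
/- Let G be a group with two actions ρ₁, ρ₂ : G → Homeo(ℝ) on the real line by homeomorphisms, and assume ρ₁ is minimal. Let S be the set of strictly increasing homeomorphisms f : ℝ → ℝ which are equivariant from ρ₁ to ρ₂; assume S is nonempty and fix f₀ ∈ S. Let ℋ := { f₀⁻¹ ∘ f : f ∈ S }. Then ℋ is an abelian group of homeomorphisms of ℝ acting freely on ℝ; precisely: (i) the identity map belongs to ℋ; (ii) ℋ is closed under composition; (iii) ℋ is closed under taking inverses; (iv) every element of ℋ that fixes some point of ℝ is the identity; (v) any two elements of ℋ commute. -/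
set_option linter.unusedSectionVars false

namespace EqGraphAux

instance : Group (ℝ ≃ₜ ℝ) where
  mul f g := g.trans f
  one := Homeomorph.refl ℝ
  inv := Homeomorph.symm
  mul_assoc f g h := Homeomorph.ext fun x => rfl
  one_mul f := Homeomorph.ext fun x => rfl
  mul_one f := Homeomorph.ext fun x => rfl
  inv_mul_cancel f := Homeomorph.ext fun x => f.symm_apply_apply x

@[simp] lemma mul_apply (f g : ℝ ≃ₜ ℝ) (x : ℝ) : (f * g) x = f (g x) := rfl
@[simp] lemma one_apply (x : ℝ) : (1 : ℝ ≃ₜ ℝ) x = x := rfl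
@[simp] lemma inv_eq_symm (f : ℝ ≃ₜ ℝ) : f⁻¹ = f.symm := rfl

lemma symm_sm (h : ℝ ≃ₜ ℝ) (hm : StrictMono ⇑h) : StrictMono ⇑h.symm := by
  intro x y hxy
  rcases lt_or_ge (h.symm x) (h.symm y) with h' | h'
  · exact h'
  · exfalso
    have := hm.monotone h'
    rw [h.apply_symm_apply, h.apply_symm_apply] at this
    exact absurd hxy (not_lt.2 this)

variable {G : Type*} [Group G]

def pgrp (ρ₁ : G → ℝ ≃ₜ ℝ) : Subgroup (ℝ ≃ₜ ℝ) where
  carrier := {h | StrictMono ⇑h ∧ ∀ γ x, h (ρ₁ γ x) = ρ₁ γ (h x)}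
  one_mem' := ⟨strictMono_id, fun _ _ => rfl⟩
  mul_mem' := by
    rintro a b ⟨ha1, ha2⟩ ⟨hb1, hb2⟩
    refine ⟨ha1.comp hb1, fun γ x => ?_⟩
    simp only [mul_apply, hb2, ha2]
  inv_mem' := by
    rintro a ⟨ha1, ha2⟩
    refine ⟨by simpa using symm_sm a ha1, fun γ x => ?_⟩
    have := ha2 γ (a.symm x)
    rw [a.apply_symm_apply] at this
    simp only [inv_eq_symm]
    rw [← this, a.symm_apply_apply]

variable {ρ₁ : G → ℝ ≃ₜ ℝ}

lemma mem_strictMono {h : ℝ ≃ₜ ℝ} (hh : h ∈ pgrp ρ₁) : StrictMono ⇑h := hh.1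

lemma fix_all (hmin : ∀ x : ℝ, Dense {y : ℝ | ∃ γ : G, ρ₁ γ x = y})
    {h : ℝ ≃ₜ ℝ} (hh : h ∈ pgrp ρ₁) {x : ℝ} (hx : h x = x) : ∀ y, h y = y := by
  have hcl : IsClosed {z : ℝ | h z = z} := isClosed_eq h.continuous continuous_id
  have horb : {y : ℝ | ∃ γ : G, ρ₁ γ x = y} ⊆ {z : ℝ | h z = z} := by
    rintro y ⟨γ, rfl⟩
    show h (ρ₁ γ x) = ρ₁ γ x
    rw [hh.2 γ x, hx]
  intro y
  have hdense : closure {y : ℝ | ∃ γ : G, ρ₁ γ x = y} = Set.univ := (hmin x).closure_eq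
  have : (Set.univ : Set ℝ) ⊆ {z : ℝ | h z = z} := by
    rw [← hdense, ← hcl.closure_eq]
    exact closure_mono horb
  exact this (Set.mem_univ y)

lemma ivt_fix {h : ℝ ≃ₜ ℝ} {a x : ℝ} (ha : h a < a) (hx : x < h x) : ∃ c, h c = c := by
  set f : ℝ → ℝ := fun t => h t - t with hf
  have hfc : Continuous f := h.continuous.sub continuous_id
  rcases le_total a x with hax | hxa
  · have := intermediate_value_Icc hax hfc.continuousOn
    have h0 : (0 : ℝ) ∈ Set.Icc (f a) (f x) := ⟨by simp [hf]; linarith, by simp [hf]; linarith⟩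
    obtain ⟨c, _, hc⟩ := this h0
    exact ⟨c, by simp [hf] at hc; linarith⟩
  · have := intermediate_value_Icc' hxa hfc.continuousOn
    have h0 : (0 : ℝ) ∈ Set.Icc (f a) (f x) := ⟨by simp [hf]; linarith, by simp [hf]; linarith⟩
    obtain ⟨c, _, hc⟩ := this h0
    exact ⟨c, by simp [hf] at hc; linarith⟩

lemma trichotomy (hmin : ∀ x : ℝ, Dense {y : ℝ | ∃ γ : G, ρ₁ γ x = y})
    {h : ℝ ≃ₜ ℝ} (hh : h ∈ pgrp ρ₁) :
    (∀ x, h x = x) ∨ (∀ x, h x < x) ∨ (∀ x, x < h x) := by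
  by_cases hfix : ∃ x, h x = x
  · exact Or.inl (fix_all hmin hh hfix.choose_spec)
  push_neg at hfix
  by_cases hlt : ∃ a, h a < a
  · obtain ⟨a, ha⟩ := hlt
    refine Or.inr (Or.inl fun x => ?_)
    rcases (hfix x).lt_or_gt with h' | h'
    · exact h'
    · exact absurd (ivt_fix ha h') (by push_neg; exact hfix)
  · push_neg at hlt
    exact Or.inr (Or.inr fun x => (hlt x).lt_of_ne (Ne.symm (hfix x)))

lemma le_of_le_pt (hmin : ∀ x : ℝ, Dense {y : ℝ | ∃ γ : G, ρ₁ γ x = y})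
    {h₁ h₂ : ℝ ≃ₜ ℝ} (hh₁ : h₁ ∈ pgrp ρ₁) (hh₂ : h₂ ∈ pgrp ρ₁)
    {x₀ : ℝ} (hx : h₁ x₀ ≤ h₂ x₀) : ∀ x, h₁ x ≤ h₂ x := by
  have hk : h₂⁻¹ * h₁ ∈ pgrp ρ₁ := mul_mem (inv_mem hh₂) hh₁
  have keval : ∀ x, (h₂⁻¹ * h₁) x = h₂.symm (h₁ x) := fun x => rfl
  rcases trichotomy hmin hk with hc | hc | hc
  · intro x
    have := hc x; rw [keval] at this
    have : h₁ x = h₂ x := by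
      have := congrArg h₂ this
      rwa [h₂.apply_symm_apply] at this
    exact this.le
  · intro x
    have := hc x; rw [keval] at this
    have := hh₂.1 this
    rw [h₂.apply_symm_apply] at this
    exact this.le
  · exfalso
    have := hc x₀; rw [keval] at this
    have := hh₂.1 this
    rw [h₂.apply_symm_apply] at this
    exact absurd hx (not_le.2 this)

lemma lt_of_lt_pt (hmin : ∀ x : ℝ, Dense {y : ℝ | ∃ γ : G, ρ₁ γ x = y})
    {h₁ h₂ : ℝ ≃ₜ ℝ} (hh₁ : h₁ ∈ pgrp ρ₁) (hh₂ : h₂ ∈ pgrp ρ₁)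
    {x₀ : ℝ} (hx : h₁ x₀ < h₂ x₀) : ∀ x, h₁ x < h₂ x := by
  have hk : h₂⁻¹ * h₁ ∈ pgrp ρ₁ := mul_mem (inv_mem hh₂) hh₁
  have keval : ∀ x, (h₂⁻¹ * h₁) x = h₂.symm (h₁ x) := fun x => rfl
  rcases trichotomy hmin hk with hc | hc | hc
  · exfalso
    have := hc x₀; rw [keval] at this
    have := congrArg h₂ this
    rw [h₂.apply_symm_apply] at this
    exact absurd hx (by rw [this]; exact lt_irrefl _)
  · intro x
    have := hc x; rw [keval] at this
    have := hh₂.1 this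
    rwa [h₂.apply_symm_apply] at this
  · exfalso
    have := hc x₀; rw [keval] at this
    have := hh₂.1 this
    rw [h₂.apply_symm_apply] at this
    exact absurd hx (not_lt.2 this.le)

lemma escape_up (s : ℝ ≃ₜ ℝ) (hpos : ∀ x, x < s x) (y t : ℝ) : ∃ n : ℕ, t < s^[n] y := by
  by_contra hb
  push_neg at hb
  have hmono : Monotone fun n => s^[n] y := monotone_nat_of_le_succ fun n => by
    rw [Function.iterate_succ_apply']
    exact (hpos _).le
  have hbdd : BddAbove (Set.range fun n => s^[n] y) := ⟨t, by rintro _ ⟨n, rfl⟩; exact hb n⟩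
  set L := ⨆ n, s^[n] y with hL
  have hlim : Filter.Tendsto (fun n => s^[n] y) Filter.atTop (nhds L) :=
    tendsto_atTop_ciSup hmono hbdd
  have hlim2 : Filter.Tendsto (fun n => s^[n+1] y) Filter.atTop (nhds L) :=
    hlim.comp (Filter.tendsto_add_atTop_nat 1)
  have hlim3 : Filter.Tendsto (fun n => s (s^[n] y)) Filter.atTop (nhds (s L)) :=
    (s.continuous.tendsto L).comp hlim
  have heq : s L = L := by
    refine tendsto_nhds_unique ?_ hlim2
    simpa [Function.iterate_succ_apply'] using hlim3
  exact absurd heq (hpos L).ne'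

lemma escape_down (s : ℝ ≃ₜ ℝ) (hneg : ∀ x, s x < x) (y t : ℝ) : ∃ n : ℕ, s^[n] y < t := by
  by_contra hb
  push_neg at hb
  have hmono : Antitone fun n => s^[n] y := antitone_nat_of_succ_le fun n => by
    rw [Function.iterate_succ_apply']
    exact (hneg _).le
  have hbdd : BddBelow (Set.range fun n => s^[n] y) := ⟨t, by rintro _ ⟨n, rfl⟩; exact hb n⟩
  set L := ⨅ n, s^[n] y with hL
  have hlim : Filter.Tendsto (fun n => s^[n] y) Filter.atTop (nhds L) :=
    tendsto_atTop_ciInf hmono hbdd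
  have hlim2 : Filter.Tendsto (fun n => s^[n+1] y) Filter.atTop (nhds L) :=
    hlim.comp (Filter.tendsto_add_atTop_nat 1)
  have hlim3 : Filter.Tendsto (fun n => s (s^[n] y)) Filter.atTop (nhds (s L)) :=
    (s.continuous.tendsto L).comp hlim
  have heq : s L = L := by
    refine tendsto_nhds_unique ?_ hlim2
    simpa [Function.iterate_succ_apply'] using hlim3
  exact absurd heq (ne_of_lt (hneg L))

lemma pow_apply (s : ℝ ≃ₜ ℝ) (n : ℕ) (x : ℝ) : (s ^ n) x = s^[n] x := by
  induction n generalizing x with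
  | zero => rfl
  | succ n ih =>
    rw [pow_succ, mul_apply, ih (s x), Function.iterate_succ_apply]

lemma zpow_natCast_apply (s : ℝ ≃ₜ ℝ) (n : ℕ) (x : ℝ) : (s ^ (n : ℤ)) x = s^[n] x := by
  rw [zpow_natCast, pow_apply]

lemma zpow_neg_natCast_apply (s : ℝ ≃ₜ ℝ) (n : ℕ) (x : ℝ) :
    (s ^ (-(n : ℤ))) x = (s.symm)^[n] x := by
  rw [zpow_neg, ← inv_zpow, zpow_natCast, inv_eq_symm, pow_apply]

lemma le_iterate (s : ℝ ≃ₜ ℝ) (hpos : ∀ x, x < s x) (n : ℕ) (x : ℝ) : x ≤ s^[n] x := by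
  induction n with
  | zero => rfl
  | succ n ih =>
    rw [Function.iterate_succ_apply']
    exact ih.trans (hpos _).le

lemma zpow_mono_exp (s : ℝ ≃ₜ ℝ) (hpos : ∀ x, x < s x) {j k : ℤ} (hjk : j ≤ k) (x : ℝ) :
    (s ^ j) x ≤ (s ^ k) x := by
  have hk : (s ^ k) x = (s ^ (k - j)) ((s ^ j) x) := by
    rw [← mul_apply, ← zpow_add, sub_add_cancel]
  rw [hk]
  have h0 : (0 : ℤ) ≤ k - j := by omega
  rw [← Int.toNat_of_nonneg h0, zpow_natCast_apply]
  exact le_iterate s hpos _ _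

lemma arch (hmin : ∀ x : ℝ, Dense {y : ℝ | ∃ γ : G, ρ₁ γ x = y})
    {s : ℝ ≃ₜ ℝ} (hs : s ∈ pgrp ρ₁) (hpos : ∀ x, x < s x)
    {g : ℝ ≃ₜ ℝ} (hg : g ∈ pgrp ρ₁) :
    ∃ m : ℤ, (∀ x, (s ^ m) x ≤ g x) ∧ (∀ x, g x < (s ^ (m + 1)) x) := by
  have hsneg : ∀ x, s.symm x < x := fun x => by
    have := hpos (s.symm x)
    rwa [s.apply_symm_apply] at this
  -- nonempty
  obtain ⟨n₀, hn₀⟩ := escape_down s.symm hsneg 0 (g 0)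
  have hne : ∃ m : ℤ, (s ^ m) 0 ≤ g 0 :=
    ⟨-(n₀ : ℤ), by rw [zpow_neg_natCast_apply]; exact hn₀.le⟩
  -- bounded above
  obtain ⟨N, hN⟩ := escape_up s hpos 0 (g 0)
  have hbdd : ∀ m : ℤ, (s ^ m) 0 ≤ g 0 → m ≤ (N : ℤ) := by
    intro m hm
    by_contra hgt
    push_neg at hgt
    have := zpow_mono_exp s hpos hgt.le (0 : ℝ)
    rw [zpow_natCast_apply] at this
    have := this.trans hm
    exact absurd hN (not_lt.2 this)
  obtain ⟨m, hm1, hm2⟩ := Int.exists_greatest_of_bdd ⟨(N : ℤ), hbdd⟩ hne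
  have hstrict : g 0 < (s ^ (m + 1)) 0 := by
    by_contra hle
    push_neg at hle
    have := hm2 (m + 1) hle
    omega
  have hsm : s ^ m ∈ pgrp ρ₁ := zpow_mem hs m
  have hsm1 : s ^ (m + 1) ∈ pgrp ρ₁ := zpow_mem hs (m + 1)
  exact ⟨m, le_of_le_pt hmin hsm hg hm1, lt_of_lt_pt hmin hg hsm1 hstrict⟩

lemma comm_key (a b : ℝ ≃ₜ ℝ) (x : ℝ) : b (a ((a⁻¹ * b⁻¹ * a * b) x)) = a (b x) := by
  show b (a (a.symm (b.symm (a (b x))))) = a (b x)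
  rw [a.apply_symm_apply, b.apply_symm_apply]

lemma not_all_lt (hmin : ∀ x : ℝ, Dense {y : ℝ | ∃ γ : G, ρ₁ γ x = y})
    {a b : ℝ ≃ₜ ℝ} (ha : a ∈ pgrp ρ₁) (hb : b ∈ pgrp ρ₁)
    (H1 : ∀ x, b (a x) < a (b x)) : False := by
  set c : ℝ ≃ₜ ℝ := a⁻¹ * b⁻¹ * a * b with hcdef
  have hcm : c ∈ pgrp ρ₁ := mul_mem (mul_mem (mul_mem (inv_mem ha) (inv_mem hb)) ha) hb
  have key : ∀ x, b (a (c x)) = a (b x) := fun x => comm_key a b x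
  have hcpos : ∀ x, x < c x := by
    intro x
    by_contra hle
    push_neg at hle
    have h1 : b (a (c x)) ≤ b (a x) := hb.1.monotone (ha.1.monotone hle)
    rw [key x] at h1
    exact absurd (H1 x) (not_lt.2 h1)
  by_cases hA : ∃ s, s ∈ pgrp ρ₁ ∧ (∀ x, x < s x) ∧ (∀ x, s (s x) ≤ c x)
  · obtain ⟨s, hsm, hspos, hs2⟩ := hA
    obtain ⟨m, hm1, hm2⟩ := arch hmin hsm hspos ha
    obtain ⟨n, hn1, hn2⟩ := arch hmin hsm hspos hb
    have up : a (b 0) < (s ^ (m + 1 + (n + 1))) 0 := by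
      have h1 : a (b 0) < a ((s ^ (n + 1)) 0) := ha.1 (hn2 0)
      have h2 : a ((s ^ (n + 1)) 0) < (s ^ (m + 1)) ((s ^ (n + 1)) 0) := hm2 _
      have h3 : (s ^ (m + 1)) ((s ^ (n + 1)) 0) = (s ^ (m + 1 + (n + 1))) 0 := by
        rw [zpow_add s (m + 1) (n + 1)]; rfl
      rw [← h3]
      exact h1.trans h2
    have low : (s ^ (m + 1 + (n + 1))) 0 ≤ a (b 0) := by
      have e2 : (s ^ m) (c 0) ≤ a (c 0) := hm1 _
      have e3 : (s ^ n) ((s ^ m) (c 0)) ≤ (s ^ n) (a (c 0)) :=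
        (zpow_mem hsm n).1.monotone e2
      have e4 : (s ^ n) (a (c 0)) ≤ b (a (c 0)) := hn1 _
      have e5 : (s ^ (n + m)) (c 0) = (s ^ n) ((s ^ m) (c 0)) := by
        rw [zpow_add s n m]; rfl
      have e6 : (s ^ (n + m)) (s (s 0)) ≤ (s ^ (n + m)) (c 0) :=
        (zpow_mem hsm (n + m)).1.monotone (hs2 0)
      have e7 : (s ^ (m + 1 + (n + 1))) 0 = (s ^ (n + m)) (s (s 0)) := by
        have h2' : s (s 0) = (s ^ (2 : ℤ)) 0 := by
          rw [show (2 : ℤ) = 1 + 1 by norm_num, zpow_add, zpow_one]; rfl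
        rw [h2', ← mul_apply, ← zpow_add s (n + m) 2, show n + m + (2:ℤ) = m + 1 + (n + 1) by ring]
      rw [e7]
      calc (s ^ (n + m)) (s (s 0)) ≤ (s ^ (n + m)) (c 0) := e6
        _ = (s ^ n) ((s ^ m) (c 0)) := e5
        _ ≤ (s ^ n) (a (c 0)) := e3
        _ ≤ b (a (c 0)) := e4
        _ = a (b 0) := key 0
    exact absurd up (not_lt.2 low)
  · push_neg at hA
    have hA' : ∀ s, s ∈ pgrp ρ₁ → (∀ x, x < s x) → ∀ x, c x < s (s x) := by
      intro s hsm hspos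
      obtain ⟨x₀, hx₀⟩ := hA s hsm hspos
      exact lt_of_lt_pt hmin hcm (mul_mem hsm hsm) (show c x₀ < (s * s) x₀ from hx₀)
    by_cases hB : ∃ t, t ∈ pgrp ρ₁ ∧ (∀ x, x < t x) ∧ (∀ x, t x < c x)
    · obtain ⟨t, htm, htpos, htc⟩ := hB
      set v : ℝ ≃ₜ ℝ := t⁻¹ * c with hvdef
      have hvm : v ∈ pgrp ρ₁ := mul_mem (inv_mem htm) hcm
      have tv : ∀ x, t (v x) = c x := fun x => t.apply_symm_apply _
      have htt : ∀ x, c x < t (t x) := hA' t htm htpos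
      have hvt : ∀ x, v x < t x := by
        intro x
        have h' := htt x
        rw [← tv x] at h'
        exact htm.1.lt_iff_lt.mp h'
      have hvpos : ∀ x, x < v x := by
        intro x
        have h' := htc x
        rw [← tv x] at h'
        exact htm.1.lt_iff_lt.mp h'
      have hvv : ∀ x, v (v x) < c x := by
        intro x
        have h' := hvt (v x)
        rwa [tv x] at h'
      have hcv := hA' v hvm hvpos 0
      exact absurd (hvv 0) (not_lt.2 hcv.le)
    · push_neg at hB
      have hcmin : ∀ t, t ∈ pgrp ρ₁ → (∀ x, x < t x) → ∀ x, c x ≤ t x := by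
        intro t htm htpos
        obtain ⟨x₀, hx₀⟩ := hB t htm htpos
        exact le_of_le_pt hmin hcm htm hx₀
      have keylem : ∀ g : ℝ ≃ₜ ℝ, g ∈ pgrp ρ₁ →
          ∀ m : ℤ, (∀ x, (c ^ m) x ≤ g x) → (∀ x, g x < (c ^ (m + 1)) x) →
          ∀ x, g x = (c ^ m) x := by
        intro g hg m h1 h2
        set w : ℝ ≃ₜ ℝ := (c ^ m)⁻¹ * g with hwdef
        have hwm : w ∈ pgrp ρ₁ := mul_mem (inv_mem (zpow_mem hcm m)) hg
        have hwge : ∀ x, x ≤ w x := by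
          intro x
          have := (inv_mem (zpow_mem hcm m) : (c ^ m)⁻¹ ∈ pgrp ρ₁).1.monotone (h1 x)
          rwa [show ((c ^ m)⁻¹) ((c ^ m) x) = x from (c ^ m).symm_apply_apply x] at this
        have hwlt : ∀ x, w x < c x := by
          intro x
          have := (inv_mem (zpow_mem hcm m) : (c ^ m)⁻¹ ∈ pgrp ρ₁).1 (h2 x)
          have hrw : ((c ^ m)⁻¹) ((c ^ (m + 1)) x) = c x := by
            have : (c ^ (m + 1)) x = (c ^ m) (c x) := by rw [zpow_add c m 1, zpow_one]; rfl
            rw [this]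
            exact (c ^ m).symm_apply_apply _
          rwa [hrw] at this
        have hwid : ∀ x, w x = x := by
          rcases trichotomy hmin hwm with h' | h' | h'
          · exact h'
          · exact absurd (h' 0) (not_lt.2 (hwge 0))
          · exact absurd (hwlt 0) (not_lt.2 (hcmin w hwm h' 0))
        intro x
        have := hwid x
        have := congrArg (c ^ m) this
        rwa [show (c ^ m) (w x) = g x from (c ^ m).apply_symm_apply _] at this
      obtain ⟨m, hm1, hm2⟩ := arch hmin hcm hcpos ha
      obtain ⟨n, hn1, hn2⟩ := arch hmin hcm hcpos hb
      have haeq := keylem a ha m hm1 hm2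
      have hbeq := keylem b hb n hn1 hn2
      have : b (a 0) = a (b 0) := by
        rw [haeq 0, hbeq ((c ^ m) 0), hbeq 0, haeq ((c ^ n) 0)]
        rw [← mul_apply, ← mul_apply, ← zpow_add, ← zpow_add, add_comm]
      exact absurd (H1 0) (not_lt.2 this.ge)

lemma commute_all (hmin : ∀ x : ℝ, Dense {y : ℝ | ∃ γ : G, ρ₁ γ x = y})
    {h₁ h₂ : ℝ ≃ₜ ℝ} (m₁ : h₁ ∈ pgrp ρ₁) (m₂ : h₂ ∈ pgrp ρ₁) :
    ∀ x, h₁ (h₂ x) = h₂ (h₁ x) := by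
  set c : ℝ ≃ₜ ℝ := h₁⁻¹ * h₂⁻¹ * h₁ * h₂ with hcdef
  have hcm : c ∈ pgrp ρ₁ := mul_mem (mul_mem (mul_mem (inv_mem m₁) (inv_mem m₂)) m₁) m₂
  have key : ∀ x, h₂ (h₁ (c x)) = h₁ (h₂ x) := fun x => comm_key h₁ h₂ x
  rcases trichotomy hmin hcm with h' | h' | h'
  · intro x
    have := key x
    rw [h' x] at this
    exact this.symm
  · exfalso
    refine not_all_lt hmin m₂ m₁ fun x => ?_
    have := m₂.1 (m₁.1 (h' x))
    rwa [key x] at this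
  · exfalso
    refine not_all_lt hmin m₁ m₂ fun x => ?_
    have := m₂.1 (m₁.1 (h' x))
    rwa [key x] at this

end EqGraphAux

/-- The set `ℋ = {f₀⁻¹ ∘ f : f ∈ S}` of compositions of strictly increasing
equivariant homeomorphisms with the inverse of a fixed one is an abelian group of
homeomorphisms of `ℝ` acting freely on `ℝ`. -/
theorem equivariant_graph_group
    {G : Type*} [Group G]
    (ρ₁ ρ₂ : G → ℝ ≃ₜ ℝ)
    (hρ₁ : ∀ γ γ' : G, ∀ x : ℝ, ρ₁ (γ * γ') x = ρ₁ γ (ρ₁ γ' x))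
    (hρ₂ : ∀ γ γ' : G, ∀ x : ℝ, ρ₂ (γ * γ') x = ρ₂ γ (ρ₂ γ' x))
    (hmin : ∀ x : ℝ, Dense {y : ℝ | ∃ γ : G, ρ₁ γ x = y})
    (S : Set (ℝ ≃ₜ ℝ))
    (hS : S = {f : ℝ ≃ₜ ℝ | StrictMono f ∧ ∀ (γ : G) (x : ℝ), f (ρ₁ γ x) = ρ₂ γ (f x)})
    (f₀ : ℝ ≃ₜ ℝ) (hf₀ : f₀ ∈ S)
    (H : Set (ℝ ≃ₜ ℝ))
    (hH : H = {h : ℝ ≃ₜ ℝ | ∃ f ∈ S, h = f.trans f₀.symm}) :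
    -- (i) the identity map belongs to ℋ
    (Homeomorph.refl ℝ ∈ H) ∧
    -- (ii) ℋ is closed under composition (h₁ ∘ h₂ = h₂.trans h₁)
    (∀ h₁ ∈ H, ∀ h₂ ∈ H, h₂.trans h₁ ∈ H) ∧
    -- (iii) ℋ is closed under taking inverses
    (∀ h ∈ H, h.symm ∈ H) ∧
    -- (iv) ℋ acts freely: an element fixing some point is the identity
    (∀ h ∈ H, (∃ x : ℝ, h x = x) → ∀ y : ℝ, h y = y) ∧
    -- (v) any two elements of ℋ commute
    (∀ h₁ ∈ H, ∀ h₂ ∈ H, ∀ x : ℝ, h₁ (h₂ x) = h₂ (h₁ x)) := by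
  have memH : ∀ h : ℝ ≃ₜ ℝ, h ∈ H ↔ h ∈ EqGraphAux.pgrp ρ₁ := by
    intro h
    constructor
    · intro hh
      rw [hH] at hh
      obtain ⟨f, hf, rfl⟩ := hh
      rw [hS] at hf hf₀
      obtain ⟨hf1, hf2⟩ := hf
      obtain ⟨hf01, hf02⟩ := hf₀
      constructor
      · exact (EqGraphAux.symm_sm f₀ hf01).comp hf1
      · intro γ x
        show f₀.symm (f (ρ₁ γ x)) = ρ₁ γ (f₀.symm (f x))
        rw [hf2]
        have h' := hf02 γ (f₀.symm (f x))
        rw [f₀.apply_symm_apply] at h'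
        rw [← h', f₀.symm_apply_apply]
    · rintro ⟨h1, h2⟩
      rw [hH]
      refine ⟨h.trans f₀, ?_, ?_⟩
      · rw [hS] at hf₀ ⊢
        obtain ⟨hf01, hf02⟩ := hf₀
        refine ⟨hf01.comp h1, fun γ x => ?_⟩
        show f₀ (h (ρ₁ γ x)) = ρ₂ γ (f₀ (h x))
        rw [h2 γ x, hf02]
      · exact Homeomorph.ext fun x =>
          (show h x = f₀.symm (f₀ (h x)) from (f₀.symm_apply_apply (h x)).symm)
  refine ⟨?_, ?_, ?_, ?_, ?_⟩
  · exact (memH _).2 ⟨fun a b hab => hab, fun _ _ => rfl⟩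
  · intro h₁ hh₁ h₂ hh₂
    exact (memH _).2 (mul_mem ((memH _).1 hh₁) ((memH _).1 hh₂))
  · intro h hh
    exact (memH _).2 (inv_mem ((memH _).1 hh))
  · rintro h hh ⟨x, hx⟩ y
    exact EqGraphAux.fix_all hmin ((memH _).1 hh) hx y
  · intro h₁ hh₁ h₂ hh₂ x
    exact EqGraphAux.commute_all hmin ((memH _).1 hh₁) ((memH _).1 hh₂) x
end

section
/- Let G be a group with two actions ρ₁, ρ₂ : G → Homeo(ℝ) on the real line by homeomorphisms, with ρ₁ minimal. Let S be the set of strictly increasing homeomorphisms f : ℝ → ℝ equivariant from ρ₁ to ρ₂; assume S is nonempty and fix f₀ ∈ S. Suppose that for some x₀ ∈ ℝ the set {f(x₀) : f ∈ S} has an accumulation point in ℝ. Then both actions are topologically conjugate to actions by translations with the same translation amounts: there exist a homeomorphism φ : ℝ → ℝ and a map r : G → ℝ with r(γγ′) = r(γ) + r(γ′) for all γ, γ′ ∈ G, such that φ(ρ₁(γ)(x)) = φ(x) + r(γ) for all γ ∈ G and x ∈ ℝ, and such that the homeomorphism ψ := φ ∘ f₀⁻¹ satisfies ψ(ρ₂(γ)(y))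 = ψ(y) + r(γ) for all γ ∈ G and y ∈ ℝ. -/
/-!
Let `C` be the group of increasing homeomorphisms of `ℝ` commuting with `ρ₁`. For `f ∈ S` the map
`f₀⁻¹ ∘ f` lies in `C`, so the accumulation hypothesis says that a `C`-orbit accumulates. By
minimality `C` acts freely, so ordering `C` by `c ↦ c 0` makes it a linearly ordered archimedean
group, and the accumulating orbit shows that it has no least positive element. Hölder's argument
then shows that `C` is abelian, hence embeds into `ℝ` by some `τ` with dense image, and the map
`φ x = sup {τ c | c 0 ≤ x}` satisfies `φ ∘ c = φ + τ c`. Each `ρ₁ γ` commutes with `C`, so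
`φ ∘ ρ₁ γ` has the same property and therefore differs from `φ` by a constant. Finally,
minimality forces `φ` to be strictly increasing, and density of `τ C` makes it onto.
-/

open Set Filter Topology

namespace OrderIso

variable {e : ℝ ≃o ℝ}

theorem forall_lt_apply_of_lt_apply (hfix : ∀ x, e x ≠ x) {y : ℝ} (hy : y < e y) (x : ℝ) :
    x < e x := by
  by_contra! hx
  obtain ⟨z, hz⟩ := intermediate_value_univ x y (e.continuous.sub continuous_id)
    ⟨sub_nonpos.2 hx, sub_nonneg.2 hy.le⟩
  exact hfix z (sub_eq_zero.1 hz)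

theorem exists_lt_pow_apply (he : ∀ x, x < e x) (y B : ℝ) : ∃ n : ℕ, B < (e ^ n) y := by
  by_contra! hB
  have hmono : Monotone fun n : ℕ => (e ^ n) y :=
    monotone_nat_of_le_succ fun n => by rw [pow_succ', RelIso.mul_apply]; exact (he _).le
  have hlim := tendsto_atTop_ciSup hmono ⟨B, forall_mem_range.2 hB⟩
  have hiter : ∀ n : ℕ, (e ^ n) y = (⇑e)^[n] y := fun n => by
    rw [hom_coe_pow (fun f : ℝ ≃o ℝ => ⇑f) rfl (fun _ _ => rfl)]
  simp only [hiter] at hlim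
  exact (he _).ne' (isFixedPt_of_tendsto_iterate hlim e.continuous.continuousAt)

theorem zpow_apply_strictMono (he : ∀ x, x < e x) (y : ℝ) :
    StrictMono fun m : ℤ => (e ^ m) y :=
  strictMono_int_of_lt_succ fun m => by
    rw [zpow_add_one, RelIso.mul_apply]; exact (e ^ m).strictMono (he y)

theorem exists_zpow_apply_le_lt (he : ∀ x, x < e x) (y t : ℝ) :
    ∃ m : ℤ, (e ^ m) y ≤ t ∧ t < (e ^ (m + 1)) y := by
  have hmono := zpow_apply_strictMono he y
  obtain ⟨n, hn⟩ := exists_lt_pow_apply he y t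
  obtain ⟨k, hk⟩ := exists_lt_pow_apply he t y
  have hlow : (e ^ (-(k : ℤ))) y ≤ t := by
    have := (e ^ (-(k : ℤ))).monotone hk.le
    rwa [← RelIso.mul_apply, ← zpow_natCast, ← zpow_add, neg_add_cancel, zpow_zero,
      RelIso.one_apply] at this
  obtain ⟨m, hm, hmax⟩ := Int.exists_greatest_of_bdd (P := fun m : ℤ => (e ^ m) y ≤ t)
    ⟨n, fun m hm => hmono.le_iff_le.1 (hm.trans (by simpa using hn.le))⟩ ⟨_, hlow⟩
  exact ⟨m, hm, lt_of_not_ge fun h => by linarith [hmax _ h]⟩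

end OrderIso

theorem denseRange_of_forall_exists_pos_lt {C : Subgroup (ℝ ≃o ℝ)} {τ : C → ℝ}
    (hτ_mul : ∀ c d, τ (c * d) = τ c + τ d)
    (hτ_le : ∀ c d : C, τ c ≤ τ d ↔ (c : ℝ ≃o ℝ) 0 ≤ (d : ℝ ≃o ℝ) 0)
    (hnomin : ∀ c ∈ C, 0 < c 0 → ∃ u ∈ C, 0 < u 0 ∧ u 0 < c 0) {h : ℝ ≃o ℝ} (hh : h ∈ C)
    (hpos : 0 < h 0) : DenseRange τ := by
  have hτ_one : τ 1 = 0 := by simpa using hτ_mul 1 1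
  have hτ_pos : ∀ c : C, 0 < τ c ↔ 0 < (c : ℝ ≃o ℝ) 0 := fun c => by
    simpa [hτ_one] using (hτ_le c 1).not
  let S := (AddMonoidHom.mk' (τ ∘ Additive.toMul) fun _ _ => hτ_mul _ _).range
  have hS : ∀ t, t ∈ S ↔ t ∈ range τ := fun t =>
    ⟨fun ⟨x, hx⟩ => ⟨x.toMul, hx⟩, fun ⟨c, hc⟩ => ⟨Additive.ofMul c, hc⟩⟩
  rw [DenseRange, ← Set.ext hS]
  refine S.dense_of_no_min (fun hbot => ?_) ?_
  · have := (hS _).2 (mem_range_self ⟨h, hh⟩)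
    rw [hbot, AddSubgroup.mem_bot] at this
    exact (hτ_pos ⟨h, hh⟩).2 hpos |>.ne' this
  · rintro ⟨_, ⟨hmem, ht⟩, hleast⟩
    obtain ⟨c, rfl⟩ := (hS _).1 hmem
    obtain ⟨u, hu, hupos, huc⟩ := hnomin c c.2 ((hτ_pos c).1 ht)
    have hτu : τ ⟨u, hu⟩ ∈ {g | g ∈ S ∧ 0 < g} :=
      ⟨(hS _).2 (mem_range_self _), (hτ_pos ⟨u, hu⟩).2 hupos⟩
    exact ((hτ_le c ⟨u, hu⟩).1 (hleast hτu)).not_gt huc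

theorem exists_lt_apply_mem_of_accPt {C : Subgroup (ℝ ≃o ℝ)} {x₀ q : ℝ}
    (hacc : AccPt q (𝓟 {y | ∃ c ∈ C, c x₀ = y})) {W : Set ℝ} (hW : W ∈ 𝓝 q) :
    ∃ e ∈ C, ∃ a ∈ W, a < e a ∧ e a ∈ W := by
  obtain ⟨a, ⟨haW, c, hc, rfl⟩, b, ⟨hbW, d, hd, rfl⟩, hab⟩ :=
    (Set.Infinite.of_accPt (hacc.nhds_inter hW)).nontrivial.exists_lt
  refine ⟨d * c⁻¹, C.mul_mem hd (C.inv_mem hc), c x₀, haW, ?_⟩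
  rw [RelIso.mul_apply, RelIso.inv_apply_self]
  exact ⟨hab, hbW⟩

def ActsFreely (C : Subgroup (ℝ ≃o ℝ)) : Prop :=
  ∀ c ∈ C, ∀ x, c x = x → c = 1

namespace ActsFreely

variable {C : Subgroup (ℝ ≃o ℝ)} (hC : ActsFreely C) {c d : ℝ ≃o ℝ}
include hC

theorem forall_lt_apply (hc : c ∈ C) {y : ℝ} (hy : y < c y) (x : ℝ) : x < c x :=
  OrderIso.forall_lt_apply_of_lt_apply
    (fun z hz => hy.ne' (by rw [hC c hc z hz, RelIso.one_apply])) hy x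

theorem apply_lt_apply (hc : c ∈ C) (hd : d ∈ C) {y : ℝ} (h : c y < d y) (x : ℝ) :
    c x < d x := by
  have hlt : ∀ z, z < (c⁻¹ * d) z :=
    hC.forall_lt_apply (C.mul_mem (C.inv_mem hc) hd)
      (by simpa only [RelIso.mul_apply, RelIso.inv_apply_self] using c⁻¹.strictMono h)
  simpa only [RelIso.mul_apply, RelIso.apply_inv_self] using c.strictMono (hlt x)

theorem apply_le_apply (hc : c ∈ C) (hd : d ∈ C) {y : ℝ} (h : c y ≤ d y) (x : ℝ) :
    c x ≤ d x :=
  not_lt.1 fun hx => (hC.apply_lt_apply hd hc hx y).not_ge h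

theorem eq_of_apply_eq (hc : c ∈ C) (hd : d ∈ C) {y : ℝ} (h : c y = d y) : c = d := by
  have := hC _ (C.mul_mem (C.inv_mem hd) hc) y
    (by rw [RelIso.mul_apply, h, RelIso.inv_apply_self])
  exact (inv_mul_eq_one.1 this).symm

/-- From `ε ^ m ≤ c < ε ^ (m + 1)` and `ε ^ n ≤ d < ε ^ (n + 1)` we get `c * d < ε ^ (m + n + 2)`
and `ε ^ (m + n) ≤ d * c`. -/
theorem commutator_apply_lt (hc : c ∈ C) (hd : d ∈ C) {ε : ℝ ≃o ℝ} (hε : ε ∈ C)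
    (hεpos : 0 < ε 0) (x : ℝ) : (c * d * c⁻¹ * d⁻¹) x < (ε * ε) x := by
  have hε' := hC.forall_lt_apply hε hεpos
  obtain ⟨m, hm, hm'⟩ := OrderIso.exists_zpow_apply_le_lt hε' 0 (c 0)
  obtain ⟨n, hn, hn'⟩ := OrderIso.exists_zpow_apply_le_lt hε' 0 (d 0)
  replace hm := hC.apply_le_apply (C.zpow_mem hε m) hc hm
  replace hn := hC.apply_le_apply (C.zpow_mem hε n) hd hn
  replace hm' := hC.apply_lt_apply hc (C.zpow_mem hε (m + 1)) hm'
  replace hn' := hC.apply_lt_apply hd (C.zpow_mem hε (n + 1)) hn'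
  set y := (d * c)⁻¹ x
  have hy : (ε ^ (m + n)) y ≤ x := calc
    (ε ^ (m + n)) y = (ε ^ n) ((ε ^ m) y) := by rw [add_comm, zpow_add, RelIso.mul_apply]
    _ ≤ d (c y) := ((ε ^ n).monotone (hm y)).trans (hn _)
    _ = x := RelIso.apply_inv_self (d * c) x
  calc (c * d * c⁻¹ * d⁻¹) x = c (d y) := by rw [mul_assoc (c * d), ← mul_inv_rev]; rfl
    _ < (ε ^ (m + 1)) (d y) := hm' _
    _ < (ε ^ (m + 1)) ((ε ^ (n + 1)) y) := (ε ^ (m + 1)).strictMono (hn' y)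
    _ = (ε ^ (2 : ℤ)) ((ε ^ (m + n)) y) := by
      simp only [← RelIso.mul_apply, ← zpow_add]; ring_nf
    _ ≤ (ε * ε) x := by rw [zpow_two]; exact (ε * ε).monotone hy

/-- Ordered by `c ↦ c 0`, a free abelian `C` is an archimedean ordered group, so it embeds
into `ℝ`. -/
theorem exists_translationNumber (hcomm : ∀ c ∈ C, ∀ d ∈ C, c * d = d * c) :
    ∃ τ : C → ℝ, (∀ c d, τ (c * d) = τ c + τ d) ∧
      ∀ c d : C, τ c ≤ τ d ↔ (c : ℝ ≃o ℝ) 0 ≤ (d : ℝ ≃o ℝ) 0 := by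
  let : CommGroup C :=
    { (inferInstance : Group C) with mul_comm := fun c d => Subtype.ext (hcomm c c.2 d d.2) }
  let : LinearOrder C := LinearOrder.lift' (fun c : C => (c : ℝ ≃o ℝ) 0)
    fun c d h => Subtype.ext (hC.eq_of_apply_eq c.2 d.2 h)
  have : IsOrderedMonoid C :=
    { mul_le_mul_left := fun a b hab c => hC.apply_le_apply a.2 b.2 hab (c.1 0) }
  have : MulArchimedean C := ⟨fun x y hy => by
    obtain ⟨n, hn⟩ := OrderIso.exists_lt_pow_apply (hC.forall_lt_apply y.2 hy) 0 (x.1 0)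
    exact ⟨n, hn.le⟩⟩
  obtain ⟨f, hf⟩ := Archimedean.exists_orderAddMonoidHom_real_injective (Additive C)
  exact ⟨fun c => f (Additive.ofMul c), fun c d => map_add f _ _,
    fun c d => (f.monotone'.strictMono_of_injective hf).le_iff_le⟩

section NoLeastPositive

variable (hnomin : ∀ c ∈ C, 0 < c 0 → ∃ u ∈ C, 0 < u 0 ∧ u 0 < c 0)
include hnomin

/-- Take `ε = min u (u⁻¹ * c)` for some `u ∈ C` with `0 < u 0 < c 0`. -/
theorem exists_mul_self_apply_le (hc : c ∈ C) (hcpos : 0 < c 0) :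
    ∃ ε ∈ C, 0 < ε 0 ∧ (ε * ε) 0 ≤ c 0 := by
  obtain ⟨u, hu, hupos, huc⟩ := hnomin c hc hcpos
  set v := u⁻¹ * c
  have hv : v ∈ C := C.mul_mem (C.inv_mem hu) hc
  have hvpos : 0 < v 0 := by
    simpa only [v, RelIso.mul_apply, RelIso.inv_apply_self] using u⁻¹.strictMono huc
  have hcv : c 0 = u (v 0) := (RelIso.apply_inv_self u (c 0)).symm
  rcases le_or_gt (u 0) (v 0) with huv | hvu
  · exact ⟨u, hu, hupos, hcv ▸ u.monotone huv⟩
  · exact ⟨v, hv, hvpos, hcv ▸ hC.apply_le_apply hv hu hvu.le _⟩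

theorem commutator_apply_zero_nonpos (hc : c ∈ C) (hd : d ∈ C) :
    (c * d * c⁻¹ * d⁻¹) 0 ≤ 0 := by
  by_contra! hk
  have hkC : c * d * c⁻¹ * d⁻¹ ∈ C :=
    C.mul_mem (C.mul_mem (C.mul_mem hc hd) (C.inv_mem hc)) (C.inv_mem hd)
  obtain ⟨ε, hε, hεpos, hεk⟩ := hC.exists_mul_self_apply_le hnomin hkC hk
  exact (hC.commutator_apply_lt hc hd hε hεpos 0).not_ge hεk

theorem commute (hc : c ∈ C) (hd : d ∈ C) : c * d = d * c := by
  have hkC : c * d * c⁻¹ * d⁻¹ ∈ C :=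
    C.mul_mem (C.mul_mem (C.mul_mem hc hd) (C.inv_mem hc)) (C.inv_mem hd)
  rcases (hC.commutator_apply_zero_nonpos hnomin hc hd).lt_or_eq with hk | hk
  · refine absurd ?_ (hC.commutator_apply_zero_nonpos hnomin hd hc).not_gt
    have hinv : d * c * d⁻¹ * c⁻¹ = (c * d * c⁻¹ * d⁻¹)⁻¹ := by group
    rw [hinv]
    simpa only [RelIso.inv_apply_self] using (c * d * c⁻¹ * d⁻¹)⁻¹.strictMono hk
  · have := hC _ hkC 0 hk
    rwa [mul_inv_eq_one, mul_inv_eq_iff_eq_mul] at this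

end NoLeastPositive

section Accumulation

variable {x₀ q : ℝ} (hacc : AccPt q (𝓟 {y | ∃ c ∈ C, c x₀ = y}))
include hacc

/-- Near `q`, `u` moves points by about `u q - q > 0`, while two nearby orbit points differ by an
element of `C` that moves one of them by less. -/
theorem exists_pos_lt_of_accPt : ∀ u ∈ C, 0 < u 0 → ∃ e ∈ C, 0 < e 0 ∧ e 0 < u 0 := by
  intro u hu hupos
  obtain ⟨m, hm, hmq⟩ : ∃ m, 0 < m ∧ q + m = u q :=
    ⟨u q - q, sub_pos.2 (hC.forall_lt_apply hu hupos q), by ring⟩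
  have hW : {y | y + m / 2 < u y} ∩ Metric.ball q (m / 4) ∈ 𝓝 q :=
    inter_mem ((isOpen_lt (continuous_add_const _) u.continuous).mem_nhds
      (by simp only [mem_ofPred_eq]; linarith)) (Metric.ball_mem_nhds q (by positivity))
  obtain ⟨e, he, a, ⟨ha, haq⟩, hae, -, heq⟩ := exists_lt_apply_mem_of_accPt hacc hW
  have hdist : e a - a < m / 2 := by
    have := dist_triangle_right (e a) a q
    rw [Real.dist_eq, abs_of_pos (sub_pos.2 hae)] at this
    simp only [Metric.mem_ball] at haq heq
    linarith
  exact ⟨e, he, hC.apply_lt_apply C.one_mem he hae 0,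
    hC.apply_lt_apply he hu (by simp only [mem_ofPred_eq] at ha; linarith) 0⟩

theorem exists_translationNumber_of_accPt :
    ∃ τ : C → ℝ, (∀ c d, τ (c * d) = τ c + τ d) ∧
      (∀ c d : C, τ c ≤ τ d ↔ (c : ℝ ≃o ℝ) 0 ≤ (d : ℝ ≃o ℝ) 0) ∧ DenseRange τ ∧
      ∃ h ∈ C, ∀ x, x < h x := by
  have hnomin := hC.exists_pos_lt_of_accPt hacc
  obtain ⟨h, hh, a, -, ha, -⟩ := exists_lt_apply_mem_of_accPt hacc univ_mem
  have hpos := hC.forall_lt_apply hh ha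
  obtain ⟨τ, hτ_mul, hτ_le⟩ :=
    hC.exists_translationNumber fun c hc d hd => hC.commute hnomin hc hd
  exact ⟨τ, hτ_mul, hτ_le, denseRange_of_forall_exists_pos_lt hτ_mul hτ_le hnomin hh (hpos 0),
    h, hh, hpos⟩

end Accumulation

end ActsFreely

section HolderMap

variable {C : Subgroup (ℝ ≃o ℝ)}

noncomputable def holderMap (τ : C → ℝ) (x : ℝ) : ℝ :=
  sSup (τ '' {c | (c : ℝ ≃o ℝ) 0 ≤ x})

variable {τ : C → ℝ}
  (hτ_mono : ∀ c d : C, (c : ℝ ≃o ℝ) 0 ≤ (d : ℝ ≃o ℝ) 0 → τ c ≤ τ d)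
  (hbot : ∀ x, ∃ c : C, (c : ℝ ≃o ℝ) 0 ≤ x) (htop : ∀ x, ∃ c : C, x ≤ (c : ℝ ≃o ℝ) 0)

include hbot in
theorem holderMap_set_nonempty (x : ℝ) : (τ '' {c : C | (c : ℝ ≃o ℝ) 0 ≤ x}).Nonempty :=
  let ⟨c, hc⟩ := hbot x; ⟨τ c, mem_image_of_mem τ hc⟩

include hτ_mono htop in
theorem holderMap_set_bddAbove (x : ℝ) : BddAbove (τ '' {c : C | (c : ℝ ≃o ℝ) 0 ≤ x}) := by
  obtain ⟨d, hd⟩ := htop x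
  exact ⟨τ d, forall_mem_image.2 fun c hc => hτ_mono c d (le_trans hc hd)⟩

include hτ_mono htop in
theorem le_holderMap {c : C} {x : ℝ} (hc : (c : ℝ ≃o ℝ) 0 ≤ x) : τ c ≤ holderMap τ x :=
  le_csSup (holderMap_set_bddAbove hτ_mono htop x) (mem_image_of_mem τ hc)

include hτ_mono hbot in
theorem holderMap_le {c : C} {x : ℝ} (hc : x ≤ (c : ℝ ≃o ℝ) 0) : holderMap τ x ≤ τ c :=
  csSup_le (holderMap_set_nonempty hbot x)
    (forall_mem_image.2 fun d hd => hτ_mono d c (le_trans hd hc))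

include hτ_mono hbot htop

theorem holderMap_apply_zero (c : C) : holderMap τ ((c : ℝ ≃o ℝ) 0) = τ c :=
  le_antisymm (holderMap_le hτ_mono hbot le_rfl) (le_holderMap hτ_mono htop le_rfl)

theorem holderMap_monotone : Monotone (holderMap τ) := fun _ y hxy =>
  csSup_le_csSup (holderMap_set_bddAbove hτ_mono htop y) (holderMap_set_nonempty hbot _)
    (image_mono fun _ hc => le_trans hc hxy)

theorem holderMap_apply (hτ_mul : ∀ c d, τ (c * d) = τ c + τ d) (c : C) (y : ℝ) :
    holderMap τ ((c : ℝ ≃o ℝ) y) = holderMap τ y + τ c := by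
  have himage : τ '' {d : C | (d : ℝ ≃o ℝ) 0 ≤ (c : ℝ ≃o ℝ) y} =
      (· + τ c) '' (τ '' {d : C | (d : ℝ ≃o ℝ) 0 ≤ y}) := by
    ext t
    simp only [mem_image, mem_ofPred_eq, exists_exists_and_eq_and]
    constructor
    · rintro ⟨d, hd, rfl⟩
      refine ⟨c⁻¹ * d, ?_, by rw [add_comm, ← hτ_mul, mul_inv_cancel_left]⟩
      simpa only [Subgroup.coe_mul, Subgroup.coe_inv, RelIso.mul_apply, RelIso.inv_apply_self]
        using (c⁻¹ : C).1.monotone hd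
    · rintro ⟨d, hd, rfl⟩
      exact ⟨c * d, (c : ℝ ≃o ℝ).monotone hd, by rw [hτ_mul, add_comm]⟩
  rw [holderMap, himage, ← Monotone.map_csSup_of_continuousAt
    (continuous_add_const _).continuousAt (monotone_id.add_const _)
    (holderMap_set_nonempty hbot y) (holderMap_set_bddAbove hτ_mono htop y)]
  rfl

theorem eq_add_holderMap (hτ_dense : DenseRange τ) {F : ℝ → ℝ} (hF : Monotone F)
    (hFτ : ∀ (c : C) y, F ((c : ℝ ≃o ℝ) y) = F y + τ c) (x : ℝ) :
    F x = F 0 + holderMap τ x := by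
  have hle : holderMap τ x ≤ F x - F 0 :=
    csSup_le (holderMap_set_nonempty hbot x) <| forall_mem_image.2 fun c hc => by
      linarith [hF hc, hFτ c 0]
  have hge : F x - F 0 ≤ holderMap τ x := by
    by_contra! hlt
    obtain ⟨_, ⟨c, rfl⟩, hc, hc'⟩ := hτ_dense.exists_between hlt
    have hxc : x < (c : ℝ ≃o ℝ) 0 :=
      lt_of_not_ge fun h => (le_holderMap hτ_mono htop h).not_gt hc
    linarith [hF hxc.le, hFτ c 0]
  linarith

theorem holderMap_surjective (hτ_dense : DenseRange τ) :
    Function.Surjective (holderMap τ) := by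
  have hmono := holderMap_monotone hτ_mono hbot htop
  have hrange : DenseRange (holderMap τ) :=
    hτ_dense.mono (range_subset_iff.2 fun c => ⟨_, holderMap_apply_zero hτ_mono hbot htop c⟩)
  refine hmono.continuous_of_denseRange hrange |>.surjective
    (hmono.tendsto_atTop_atTop fun b => ?_) (hmono.tendsto_atBot_atBot fun b => ?_)
  · obtain ⟨_, ⟨x, rfl⟩, hx, -⟩ := hrange.exists_between (lt_add_one b)
    exact ⟨x, hx.le⟩
  · obtain ⟨_, ⟨x, rfl⟩, -, hx⟩ := hrange.exists_between (sub_one_lt b)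
    exact ⟨x, hx.le⟩

end HolderMap

theorem strictMono_of_commute {g : ℝ ≃ₜ ℝ} {e : ℝ ≃o ℝ} (he : ∀ x, x < e x)
    (hge : ∀ x, g (e x) = e (g x)) : StrictMono g :=
  g.continuous.strictMono_of_inj g.injective |>.resolve_right fun hanti =>
    (hanti (he 0)).not_gt (hge 0 ▸ he (g 0))

section MinimalAction

variable {G : Type*}

def IsMinimalAction (ρ : G → ℝ ≃ₜ ℝ) : Prop :=
  ∀ x : ℝ, Dense {y : ℝ | ∃ γ : G, ρ γ x = y}

def orderCentralizer (ρ : G → ℝ ≃ₜ ℝ) : Subgroup (ℝ ≃o ℝ) where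
  carrier := {c | ∀ γ x, c (ρ γ x) = ρ γ (c x)}
  one_mem' _ _ := rfl
  mul_mem' hc hd γ x := by rw [RelIso.mul_apply, RelIso.mul_apply, hd, hc]
  inv_mem' {c} hc γ x := by
    rw [← c.injective.eq_iff, RelIso.apply_inv_self, hc, RelIso.apply_inv_self]

namespace IsMinimalAction

variable {ρ : G → ℝ ≃ₜ ℝ} (hρ : IsMinimalAction ρ)
include hρ

theorem eq_univ_of_isClosed {K : Set ℝ} (hK : IsClosed K) {x : ℝ} (hx : x ∈ K)
    (hinv : ∀ γ y, y ∈ K → ρ γ y ∈ K) : K = univ :=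
  eq_univ_of_univ_subset <| (hρ x).closure_eq ▸
    closure_minimal (by rintro _ ⟨γ, rfl⟩; exact hinv γ x hx) hK

theorem actsFreely : ActsFreely (orderCentralizer ρ) := fun c hc x hx => by
  have hfix := hρ.eq_univ_of_isClosed (isClosed_eq c.continuous continuous_id) hx
    fun γ y (hy : c y = y) => (hc γ y).trans (congrArg (ρ γ) hy)
  exact RelIso.ext (eq_univ_iff_forall.1 hfix)

/-- The points near which `F` is locally constant form an open `ρ`-invariant set, which by
minimality is empty or everything. -/
theorem strictMono_of_apply_eq_add {F : ℝ → ℝ} (hF : Monotone F) {r : G → ℝ}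
    (hFρ : ∀ γ x, F (ρ γ x) = F x + r γ) {a b : ℝ} (hab : F a ≠ F b) : StrictMono F := by
  refine fun x y hxy => (hF hxy.le).lt_of_ne fun hxy' => hab ?_
  set U := {z | ∀ᶠ u in 𝓝 z, F u = F z}
  have hU : IsOpen U := isOpen_iff_mem_nhds.2 fun z hz => by
    filter_upwards [hz.eventually_nhds, hz] with u hu hu'
    exact hu.mono fun v hv => hv.trans hu'.symm
  have hmid : (x + y) / 2 ∈ U := by
    filter_upwards [Ioo_mem_nhds (by linarith : x < (x + y) / 2) (by linarith : (x + y) / 2 < y)]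
      with u hu
    linarith [hF hu.1.le, hF hu.2.le, hF (by linarith : x ≤ (x + y) / 2),
      hF (by linarith : (x + y) / 2 ≤ y)]
  have hUuniv : U = univ := by
    by_contra hne
    obtain ⟨w, hw⟩ := (ne_univ_iff_exists_notMem U).1 hne
    refine (hρ.eq_univ_of_isClosed hU.isClosed_compl hw fun γ z hz hρz => hz ?_).symm.subset
      (mem_univ _) hmid
    filter_upwards [((ρ γ).continuous.tendsto z).eventually hρz] with u hu
    simpa only [hFρ, add_left_inj] using hu
  have hloc : IsLocallyConstant F :=
    (IsLocallyConstant.iff_eventually_eq F).2 (eq_univ_iff_forall.1 hUuniv)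
  exact hloc.apply_eq_of_preconnectedSpace a b

end IsMinimalAction

theorem IsMinimalAction.exists_conj_translations_of_accPt [Group G] {ρ : G → ℝ ≃ₜ ℝ}
    (hmul : ∀ γ γ' x, ρ (γ * γ') x = ρ γ (ρ γ' x)) (hρ : IsMinimalAction ρ) {x₀ q : ℝ}
    (hacc : AccPt q (𝓟 {y | ∃ c ∈ orderCentralizer ρ, c x₀ = y})) :
    ∃ (φ : ℝ ≃ₜ ℝ) (r : G → ℝ),
      (∀ γ γ', r (γ * γ') = r γ + r γ') ∧ ∀ γ x, φ (ρ γ x) = φ x + r γ := by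
  set C := orderCentralizer ρ
  obtain ⟨τ, hτ_mul, hτ_le, hτ_dense, h, hh, hpos⟩ :=
    hρ.actsFreely.exists_translationNumber_of_accPt hacc
  have hτ_mono (c d : C) : (c : ℝ ≃o ℝ) 0 ≤ (d : ℝ ≃o ℝ) 0 → τ c ≤ τ d := (hτ_le c d).2
  have hbetween (x : ℝ) := OrderIso.exists_zpow_apply_le_lt hpos 0 x
  have hbot (x : ℝ) : ∃ c : C, (c : ℝ ≃o ℝ) 0 ≤ x :=
    let ⟨m, hm, _⟩ := hbetween x; ⟨⟨_, C.zpow_mem hh m⟩, hm⟩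
  have htop (x : ℝ) : ∃ c : C, x ≤ (c : ℝ ≃o ℝ) 0 :=
    let ⟨m, _, hm⟩ := hbetween x; ⟨⟨_, C.zpow_mem hh (m + 1)⟩, hm.le⟩
  set φ := holderMap τ
  have hmono : Monotone φ := holderMap_monotone hτ_mono hbot htop
  have hφρ (γ : G) (x : ℝ) : φ (ρ γ x) = φ x + φ (ρ γ 0) := by
    rw [add_comm]
    refine eq_add_holderMap hτ_mono hbot htop hτ_dense
      (hmono.comp (strictMono_of_commute hpos fun x => (hh γ x).symm).monotone) (fun c y => ?_) x
    simp only [Function.comp_apply, ← c.2 γ y, holderMap_apply hτ_mono hbot htop hτ_mul, φ]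
  have hφh : φ (((1 : C) : ℝ ≃o ℝ) 0) ≠ φ (((⟨h, hh⟩ : C) : ℝ ≃o ℝ) 0) := by
    rw [show φ = holderMap τ from rfl, holderMap_apply_zero hτ_mono hbot htop,
      holderMap_apply_zero hτ_mono hbot htop]
    exact fun heq => (hpos 0).not_ge ((hτ_le ⟨h, hh⟩ 1).1 heq.ge)
  have hstrict : StrictMono φ := hρ.strictMono_of_apply_eq_add hmono hφρ hφh
  have hsurj : Function.Surjective φ := holderMap_surjective hτ_mono hbot htop hτ_dense
  refine ⟨(hstrict.orderIsoOfSurjective φ hsurj).toHomeomorph, fun γ => φ (ρ γ 0),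
    fun γ γ' => ?_, hφρ⟩
  dsimp only
  rw [hmul, hφρ, add_comm]

theorem exists_mem_orderCentralizer_eq_symm_comp {ρ₁ ρ₂ : G → ℝ ≃ₜ ℝ} {f₀ f : ℝ ≃ₜ ℝ}
    (hf₀ : StrictMono f₀) (hf₀e : ∀ γ, Function.Semiconj f₀ (ρ₁ γ) (ρ₂ γ))
    (hf : StrictMono f) (hfe : ∀ γ, Function.Semiconj f (ρ₁ γ) (ρ₂ γ)) :
    ∃ c ∈ orderCentralizer ρ₁, ⇑c = f₀.symm ∘ f := by
  have hf₀' : StrictMono f₀.symm := fun a b hab => hf₀.lt_iff_lt.1 (by simpa using hab)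
  refine ⟨(hf₀'.comp hf).orderIsoOfSurjective _ (f₀.symm.surjective.comp f.surjective),
    fun γ x => ?_, rfl⟩
  simp only [StrictMono.coe_orderIsoOfSurjective, Function.comp_apply, hfe γ x]
  exact (hf₀e γ).inverse_left f₀.symm_apply_apply f₀.apply_symm_apply (f x)

end MinimalAction

theorem actions_conjugate_to_translations_of_accumulation_general
    {G : Type*} [Group G]
    (ρ₁ ρ₂ : G → ℝ ≃ₜ ℝ)
    (hρ₁ : ∀ γ γ' : G, ∀ x : ℝ, ρ₁ (γ * γ') x = ρ₁ γ (ρ₁ γ' x))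
    (hmin : ∀ x : ℝ, Dense {y : ℝ | ∃ γ : G, ρ₁ γ x = y})
    (S : Set (ℝ ≃ₜ ℝ))
    (hS : S = {f : ℝ ≃ₜ ℝ | StrictMono f ∧ ∀ (γ : G) (x : ℝ), f (ρ₁ γ x) = ρ₂ γ (f x)})
    (f₀ : ℝ ≃ₜ ℝ) (hf₀ : f₀ ∈ S)
    (x₀ p : ℝ)
    (hacc : ∀ ε : ℝ, 0 < ε → ∃ f ∈ S, f x₀ ≠ p ∧ |f x₀ - p| < ε) :
    ∃ (φ : ℝ ≃ₜ ℝ) (r : G → ℝ),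
      (∀ γ γ' : G, r (γ * γ') = r γ + r γ') ∧
      (∀ (γ : G) (x : ℝ), φ (ρ₁ γ x) = φ x + r γ) ∧
      (∀ (γ : G) (y : ℝ), φ (f₀.symm (ρ₂ γ y)) = φ (f₀.symm y) + r γ) := by
  obtain ⟨hf₀m, hf₀e⟩ := hS ▸ hf₀
  have haccS : AccPt p (𝓟 {y | ∃ f ∈ S, f x₀ = y}) := accPt_iff_nhds.2 fun U hU => by
    obtain ⟨ε, hε, hball⟩ := Metric.mem_nhds_iff.1 hU
    obtain ⟨f, hf, hne, hlt⟩ := hacc ε hε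
    exact ⟨f x₀, ⟨hball hlt, f, hf, rfl⟩, hne⟩
  have haccC : AccPt (f₀.symm p) (𝓟 {y | ∃ c ∈ orderCentralizer ρ₁, c x₀ = y}) := by
    refine (haccS.map f₀.symm.continuous.continuousAt f₀.symm.injective).mono ?_
    rw [map_principal, principal_mono]
    rintro _ ⟨_, ⟨f, hf, rfl⟩, rfl⟩
    obtain ⟨hfm, hfe⟩ := hS ▸ hf
    obtain ⟨c, hc, hcf⟩ := exists_mem_orderCentralizer_eq_symm_comp hf₀m hf₀e hfm hfe
    exact ⟨c, hc, congrFun hcf x₀⟩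
  obtain ⟨φ, r, hr, hφ⟩ := IsMinimalAction.exists_conj_translations_of_accPt hρ₁ hmin haccC
  refine ⟨φ, r, hr, hφ, fun γ y => ?_⟩
  rw [Function.Semiconj.inverse_left (hf₀e γ) f₀.symm_apply_apply f₀.apply_symm_apply y, hφ]

/-- If the set of strictly increasing equivariant homeomorphisms has values at
some point accumulating in `ℝ`, then both actions are simultaneously topologically conjugate
to the same action by translations. -/
theorem actions_conjugate_to_translations_of_accumulation
    {G : Type*} [Group G]
    (ρ₁ ρ₂ : G → ℝ ≃ₜ ℝ)
    (hρ₁ : ∀ γ γ' : G, ∀ x : ℝ, ρ₁ (γ * γ') x = ρ₁ γ (ρ₁ γ' x))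
    (hρ₂ : ∀ γ γ' : G, ∀ x : ℝ, ρ₂ (γ * γ') x = ρ₂ γ (ρ₂ γ' x))
    (hmin : ∀ x : ℝ, Dense {y : ℝ | ∃ γ : G, ρ₁ γ x = y})
    (S : Set (ℝ ≃ₜ ℝ))
    (hS : S = {f : ℝ ≃ₜ ℝ | StrictMono f ∧ ∀ (γ : G) (x : ℝ), f (ρ₁ γ x) = ρ₂ γ (f x)})
    (hSne : S.Nonempty) (f₀ : ℝ ≃ₜ ℝ) (hf₀ : f₀ ∈ S)
    (x₀ p : ℝ)
    (hacc : ∀ ε : ℝ, 0 < ε → ∃ f ∈ S, f x₀ ≠ p ∧ |f x₀ - p| < ε) :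
    ∃ (φ : ℝ ≃ₜ ℝ) (r : G → ℝ),
      (∀ γ γ' : G, r (γ * γ') = r γ + r γ') ∧
      (∀ (γ : G) (x : ℝ), φ (ρ₁ γ x) = φ x + r γ) ∧
      (∀ (γ : G) (y : ℝ), φ (f₀.symm (ρ₂ γ y)) = φ (f₀.symm y) + r γ) :=
  actions_conjugate_to_translations_of_accumulation_general ρ₁ ρ₂ hρ₁ hmin S hS f₀ hf₀ x₀ p hacc
end

section
/- Let H be a set of homeomorphisms of ℝ and let E ⊆ ℝ be the unique minimal set of H, meaning: E is nonempty, closed, h(E) = E for every h ∈ H, every nonempty closed subset F ⊆ E with h(F) = F for all h ∈ H equals E, and moreover any nonempty closed subset E′ ⊆ ℝ with h(E′) = E′ for all h ∈ H and having no proper nonempty closed H-invariant subset equals E. Let G be a group acting on ℝ by homeomorphisms via ρ : G → Homeo(ℝ), such that the G-action is minimal (every G-orbit is dense in ℝ) and every ρ(γ) commutes with every element of H, i.e. ρ(γ) ∘ h = h ∘ ρ(γ) for all γ ∈ G and h ∈ H. Then E = ℝ. -/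
/-! A homeomorphism commuting with `H` carries minimal sets of `H` to minimal sets of `H`, so by
uniqueness every `ρ γ` preserves `E`. Hence `E` contains the `G`-orbit of any of its points; that
orbit is dense and `E` is closed, so `E = ℝ`. -/

section

open Set

variable {X : Type*} [TopologicalSpace X]

def IsInvariantSet (H : Set (X ≃ₜ X)) (F : Set X) : Prop :=
  ∀ h ∈ H, h '' F = F

structure IsMinimalSet (H : Set (X ≃ₜ X)) (E : Set X) : Prop where
  nonempty : E.Nonempty
  isClosed : IsClosed E
  isInvariantSet : IsInvariantSet H E
  eq_of_subset : ∀ F ⊆ E, F.Nonempty → IsClosed F → IsInvariantSet H F → F = E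

variable {H : Set (X ≃ₜ X)}

theorem IsInvariantSet.image_of_commute {F : Set X} (hF : IsInvariantSet H F) {f : X → X}
    (hf : ∀ h ∈ H, Function.Commute f h) : IsInvariantSet H (f '' F) := fun h hh => by
  rw [← (hf h hh).set_image F, hF h hh]

theorem Homeomorph.commute_symm_of_commute {f : X ≃ₜ X} {g : X → X}
    (hfg : Function.Commute f g) : Function.Commute f.symm g :=
  hfg.inverse_left f.symm_apply_apply f.apply_symm_apply

theorem IsMinimalSet.image_of_commute {E : Set X} (hE : IsMinimalSet H E) {f : X ≃ₜ X}
    (hf : ∀ h ∈ H, Function.Commute f h) : IsMinimalSet H (f '' E) where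
  nonempty := hE.nonempty.image f
  isClosed := f.isClosedMap E hE.isClosed
  isInvariantSet := hE.isInvariantSet.image_of_commute hf
  eq_of_subset F hFE hFne hFcl hFinv := by
    have hf_symm : ∀ h ∈ H, Function.Commute f.symm h := fun h hh =>
      Homeomorph.commute_symm_of_commute (hf h hh)
    have hpullback : f.symm '' F = E :=
      hE.eq_of_subset _ ((image_mono hFE).trans (f.toEquiv.symm_image_image E).subset)
        (hFne.image _) (f.symm.isClosedMap F hFcl) (hFinv.image_of_commute hf_symm)
    rw [← hpullback]
    exact (f.toEquiv.image_symm_image F).symm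

theorem IsClosed.eq_univ_of_range_subset {ι : Type*} {E : Set X} (hE : IsClosed E)
    {g : ι → X} (hg : Dense (range g)) (hgE : range g ⊆ E) : E = univ := by
  rw [← hE.closure_eq, dense_iff_closure_eq.mp (hg.mono hgE)]

end

theorem unique_minimal_set_eq_univ_of_commuting_minimal_action_general
    {G : Type*}
    (H : Set (ℝ ≃ₜ ℝ)) (E : Set ℝ)
    -- E is nonempty, closed and H-invariant
    (hEne : E.Nonempty) (hEcl : IsClosed E)
    (hEinv : ∀ h ∈ H, h '' E = E)
    -- E is a minimal set of H
    (hEmin : ∀ F : Set ℝ, F ⊆ E → F.Nonempty → IsClosed F → (∀ h ∈ H, h '' F = F) → F = E)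
    -- E is the unique minimal set of H
    (hEuniq : ∀ E' : Set ℝ, E'.Nonempty → IsClosed E' → (∀ h ∈ H, h '' E' = E') →
      (∀ F : Set ℝ, F ⊆ E' → F.Nonempty → IsClosed F → (∀ h ∈ H, h '' F = F) → F = E') →
      E' = E)
    -- the action of G
    (ρ : G → ℝ ≃ₜ ℝ)
    (hGmin : ∀ x : ℝ, Dense {y : ℝ | ∃ γ : G, ρ γ x = y})
    -- every ρ(γ) commutes with every element of H
    (hcomm : ∀ (γ : G), ∀ h ∈ H, ∀ x : ℝ, ρ γ (h x) = h (ρ γ x)) :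
    E = Set.univ := by
  have hE : IsMinimalSet H E := ⟨hEne, hEcl, hEinv, hEmin⟩
  have hρE : ∀ γ, ρ γ '' E = E := fun γ =>
    have hγE := hE.image_of_commute (f := ρ γ) (hcomm γ)
    hEuniq _ hγE.nonempty hγE.isClosed hγE.isInvariantSet hγE.eq_of_subset
  obtain ⟨x, hx⟩ := hEne
  refine hEcl.eq_univ_of_range_subset (hGmin x) ?_
  rintro _ ⟨γ, rfl⟩
  exact hρE γ ▸ Set.mem_image_of_mem _ hx

/-- If `E` is the unique minimal set of a family `H` of homeomorphisms of `ℝ`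
and a group `G` acts minimally on `ℝ` commuting with every element of `H`, then `E = ℝ`. -/
theorem unique_minimal_set_eq_univ_of_commuting_minimal_action
    {G : Type*} [Group G]
    (H : Set (ℝ ≃ₜ ℝ)) (E : Set ℝ)
    -- E is nonempty, closed and H-invariant
    (hEne : E.Nonempty) (hEcl : IsClosed E)
    (hEinv : ∀ h ∈ H, h '' E = E)
    -- E is a minimal set of H
    (hEmin : ∀ F : Set ℝ, F ⊆ E → F.Nonempty → IsClosed F → (∀ h ∈ H, h '' F = F) → F = E)
    -- E is the unique minimal set of H
    (hEuniq : ∀ E' : Set ℝ, E'.Nonempty → IsClosed E' → (∀ h ∈ H, h '' E' = E') →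
      (∀ F : Set ℝ, F ⊆ E' → F.Nonempty → IsClosed F → (∀ h ∈ H, h '' F = F) → F = E') →
      E' = E)
    -- the action of G
    (ρ : G → ℝ ≃ₜ ℝ)
    (hρ : ∀ γ γ' : G, ∀ x : ℝ, ρ (γ * γ') x = ρ γ (ρ γ' x))
    (hGmin : ∀ x : ℝ, Dense {y : ℝ | ∃ γ : G, ρ γ x = y})
    -- every ρ(γ) commutes with every element of H
    (hcomm : ∀ (γ : G), ∀ h ∈ H, ∀ x : ℝ, ρ γ (h x) = h (ρ γ x)) :
    E = Set.univ :=
  unique_minimal_set_eq_univ_of_commuting_minimal_action_general H E hEne hEcl hEinv hEmin hEuniq ρ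
    hGmin hcomm
end

section
/- Let λ > 1 be a real number, G a group, and k : G → ℤ, a : G → ℝ, b : G → ℝ functions satisfying, for all γ, γ′ ∈ G: k(γγ′) = k(γ) + k(γ′), a(γγ′) = λ^{k(γ)} a(γ′) + a(γ), and b(γγ′) = λ^{−k(γ)} b(γ′) + b(γ), so that γ·(x, y, z) := (λ^{k(γ)} x + a(γ), λ^{k(γ)} y + a(γ), λ^{−k(γ)} z + b(γ)) defines an action of G on ℝ³ by homeomorphisms. Assume: (i) if k(γ) = 0, a(γ) = 0 and b(γ) = 0 then γ is the identity of G; (ii) the subgroup {(a(γ), b(γ)) : γ ∈ G, k(γ) = 0} of ℝ² is discrete. Let Ω := {(x, y, z) ∈ ℝ³ : x ≠ y}. Then the action of G on Ω is free (if γ·p = p for some p ∈ Ω then γ is the identity) and properly discontinuous (for all compact subsets K, L ⊆ Ω, the set {γ ∈ G : (γ·K) ∩ L ≠ ∅} is finite). -/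
open Metric Set

/-- An `ε`-separated set meets any closed ball in a finite set. -/
lemma sep_inter_closedBall_finite {S : Set (ℝ × ℝ)} {ε : ℝ} (hε : 0 < ε)
    (hsep : ∀ q ∈ S, ∀ q' ∈ S, dist q q' < ε → q = q') (R : ℝ) :
    (S ∩ Metric.closedBall 0 R).Finite := by
  obtain ⟨t, -, htf, hcov⟩ :=
    finite_cover_balls_of_compact (isCompact_closedBall (0 : ℝ × ℝ) R) (half_pos hε)
  have hsub : S ∩ Metric.closedBall 0 R ⊆ ⋃ x ∈ t, S ∩ Metric.ball x (ε / 2) := by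
    intro q hq
    obtain ⟨x, hx, hq'⟩ := Set.mem_iUnion₂.1 (hcov hq.2)
    exact Set.mem_iUnion₂.2 ⟨x, hx, hq.1, hq'⟩
  refine Set.Finite.subset (htf.biUnion fun x _ => Set.Subsingleton.finite ?_) hsub
  intro q hq q' hq'
  apply hsep q hq.1 q' hq'.1
  calc dist q q' ≤ dist q x + dist x q' := dist_triangle _ _ _
    _ < ε / 2 + ε / 2 :=
        add_lt_add (mem_ball.1 hq.2) (by rw [dist_comm]; exact mem_ball.1 hq'.2)
    _ = ε := by ring


/-- The affine action `γ·(x,y,z) = (λ^{k γ} x + a γ, λ^{k γ} y + a γ,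
λ^{-k γ} z + b γ)` of `G` on the region `Ω = {x ≠ y}` of `ℝ³` is free and properly
discontinuous, provided it is faithful and the lattice part is discrete. -/
theorem affine_action_free_properly_discontinuous
    {G : Type*} [Group G] (l : ℝ) (hl : 1 < l)
    (k : G → ℤ) (a b : G → ℝ)
    (hk : ∀ γ γ' : G, k (γ * γ') = k γ + k γ')
    (ha : ∀ γ γ' : G, a (γ * γ') = l ^ (k γ) * a γ' + a γ)
    (hb : ∀ γ γ' : G, b (γ * γ') = l ^ (-(k γ)) * b γ' + b γ)
    -- (i) faithfulness
    (hfaith : ∀ γ : G, k γ = 0 → a γ = 0 → b γ = 0 → γ = 1)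
    -- (ii) the subgroup {(a γ, b γ) : k γ = 0} of ℝ² is discrete
    (hdisc : ∀ p ∈ {q : ℝ × ℝ | ∃ γ : G, k γ = 0 ∧ q = (a γ, b γ)},
      ∃ ε : ℝ, 0 < ε ∧ ∀ q ∈ {q : ℝ × ℝ | ∃ γ : G, k γ = 0 ∧ q = (a γ, b γ)},
        dist q p < ε → q = p)
    -- the action on ℝ³
    (act : G → ℝ × ℝ × ℝ → ℝ × ℝ × ℝ)
    (hact : ∀ (γ : G) (x y z : ℝ),
      act γ (x, y, z) = (l ^ (k γ) * x + a γ, l ^ (k γ) * y + a γ, l ^ (-(k γ)) * z + b γ))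
    (Ω : Set (ℝ × ℝ × ℝ)) (hΩ : Ω = {p : ℝ × ℝ × ℝ | p.1 ≠ p.2.1}) :
    -- the action is free on Ω
    (∀ (γ : G), ∀ p ∈ Ω, act γ p = p → γ = 1) ∧
    -- the action is properly discontinuous on Ω
    (∀ K L : Set (ℝ × ℝ × ℝ), K ⊆ Ω → L ⊆ Ω → IsCompact K → IsCompact L →
      {γ : G | (act γ '' K ∩ L).Nonempty}.Finite) := by
  have hl0 : (0:ℝ) < l := lt_trans one_pos hl
  have hz : ∀ n : ℤ, (0:ℝ) < l ^ n := fun n => zpow_pos hl0 n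
  have hk1 : k 1 = 0 := by have h := hk 1 1; rw [one_mul] at h; omega
  have ha1 : a 1 = 0 := by
    have h := ha 1 1; rw [one_mul, hk1] at h; simp at h; linarith
  have hb1 : b 1 = 0 := by
    have h := hb 1 1; rw [one_mul, hk1] at h; simp at h; linarith
  have hkinv : ∀ γ : G, k γ⁻¹ = -(k γ) := by
    intro γ; have h := hk γ γ⁻¹; rw [mul_inv_cancel, hk1] at h; omega
  have hainv : ∀ γ : G, a γ⁻¹ = -(l ^ (-(k γ)) * a γ) := by
    intro γ
    have h := ha γ γ⁻¹; rw [mul_inv_cancel, ha1] at h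
    have hmul : l ^ (-(k γ)) * l ^ (k γ) = 1 := by
      rw [← zpow_add₀ hl0.ne']; simp
    have h2 : l ^ (k γ) * a γ⁻¹ = -a γ := by linarith
    calc a γ⁻¹ = (l ^ (-(k γ)) * l ^ (k γ)) * a γ⁻¹ := by rw [hmul, one_mul]
      _ = l ^ (-(k γ)) * (l ^ (k γ) * a γ⁻¹) := by ring
      _ = -(l ^ (-(k γ)) * a γ) := by rw [h2]; ring
  have hbinv : ∀ γ : G, b γ⁻¹ = -(l ^ (k γ) * b γ) := by
    intro γ
    have h := hb γ γ⁻¹; rw [mul_inv_cancel, hb1] at h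
    have hmul : l ^ (k γ) * l ^ (-(k γ)) = 1 := by
      rw [← zpow_add₀ hl0.ne']; simp
    have h2 : l ^ (-(k γ)) * b γ⁻¹ = -b γ := by linarith
    calc b γ⁻¹ = (l ^ (k γ) * l ^ (-(k γ))) * b γ⁻¹ := by rw [hmul, one_mul]
      _ = l ^ (k γ) * (l ^ (-(k γ)) * b γ⁻¹) := by ring
      _ = -(l ^ (k γ) * b γ) := by rw [h2]; ring
  have hinj : ∀ γ γ' : G, k γ = k γ' → a γ = a γ' → b γ = b γ' → γ = γ' := by
    intro γ γ' h1 h2 h3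
    have hkd : k (γ⁻¹ * γ') = 0 := by rw [hk, hkinv]; omega
    have had : a (γ⁻¹ * γ') = 0 := by
      rw [ha, hainv, hkinv, h1, h2]; ring
    have hbd : b (γ⁻¹ * γ') = 0 := by
      rw [hb, hbinv, hkinv, neg_neg, h1, h3]; ring
    exact inv_mul_eq_one.mp (hfaith _ hkd had hbd)
  constructor
  · -- freeness
    intro γ p hp hfix
    rw [hΩ] at hp
    have h := hact γ p.1 p.2.1 p.2.2
    rw [show ((p.1, p.2.1, p.2.2) : ℝ × ℝ × ℝ) = p from rfl, hfix] at h
    have e1 : p.1 = l ^ (k γ) * p.1 + a γ := congrArg Prod.fst h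
    have e2 : p.2.1 = l ^ (k γ) * p.2.1 + a γ := congrArg (fun q => q.2.1) h
    have e3 : p.2.2 = l ^ (-(k γ)) * p.2.2 + b γ := congrArg (fun q => q.2.2) h
    have hsub : (l ^ (k γ) - 1) * (p.1 - p.2.1) = 0 := by linarith
    have hpow : l ^ (k γ) = 1 := by
      rcases mul_eq_zero.1 hsub with h' | h'
      · linarith
      · exact absurd (sub_eq_zero.1 h') hp
    have hk0 : k γ = 0 := by
      have : l ^ (k γ) = l ^ (0 : ℤ) := by simpa using hpow
      exact (zpow_right_strictMono₀ hl).injective this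
    have ha0 : a γ = 0 := by rw [hk0] at e1; simp at e1; linarith
    have hb0 : b γ = 0 := by rw [hk0] at e3; simp at e3; linarith
    exact hfaith γ hk0 ha0 hb0
  · -- proper discontinuity
    intro K L hKΩ hLΩ hK hL
    rcases K.eq_empty_or_nonempty with hKe | hKne
    · apply Set.Finite.subset Set.finite_empty
      rintro γ ⟨q, ⟨p, hp, -⟩, -⟩
      simp [hKe] at hp
    rcases L.eq_empty_or_nonempty with hLe | hLne
    · apply Set.Finite.subset Set.finite_empty
      rintro γ ⟨q, -, hq⟩
      simp [hLe] at hq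
    -- bounds on coordinates
    obtain ⟨MK0, hMK0⟩ := hK.isBounded.subset_closedBall 0
    obtain ⟨ML0, hML0⟩ := hL.isBounded.subset_closedBall 0
    set MK := max MK0 0 with hMKdef
    set ML := max ML0 0 with hMLdef
    have hMKnn : 0 ≤ MK := le_max_right _ _
    have hMLnn : 0 ≤ ML := le_max_right _ _
    have hKb : ∀ p ∈ K, |p.1| ≤ MK ∧ |p.2.1| ≤ MK ∧ |p.2.2| ≤ MK := by
      intro p hp
      have h0 := mem_closedBall.1 (hMK0 hp)
      rw [dist_zero_right] at h0
      have h1 : ‖p‖ ≤ MK := le_trans h0 (le_max_left _ _)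
      refine ⟨?_, ?_, ?_⟩
      · exact le_trans (by simpa [Real.norm_eq_abs] using norm_fst_le p) h1
      · exact le_trans (le_trans (by simpa [Real.norm_eq_abs] using norm_fst_le p.2)
          (norm_snd_le p)) h1
      · exact le_trans (le_trans (by simpa [Real.norm_eq_abs] using norm_snd_le p.2)
          (norm_snd_le p)) h1
    have hLb : ∀ p ∈ L, |p.1| ≤ ML ∧ |p.2.1| ≤ ML ∧ |p.2.2| ≤ ML := by
      intro p hp
      have h0 := mem_closedBall.1 (hML0 hp)
      rw [dist_zero_right] at h0
      have h1 : ‖p‖ ≤ ML := le_trans h0 (le_max_left _ _)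
      refine ⟨?_, ?_, ?_⟩
      · exact le_trans (by simpa [Real.norm_eq_abs] using norm_fst_le p) h1
      · exact le_trans (le_trans (by simpa [Real.norm_eq_abs] using norm_fst_le p.2)
          (norm_snd_le p)) h1
      · exact le_trans (le_trans (by simpa [Real.norm_eq_abs] using norm_snd_le p.2)
          (norm_snd_le p)) h1
    -- lower bounds on the separation |x - y|
    have hfc : Continuous fun p : ℝ × ℝ × ℝ => |p.1 - p.2.1| :=
      (continuous_fst.sub (continuous_fst.comp continuous_snd)).abs
    obtain ⟨pK, hpKm, hpKmin⟩ := hK.exists_isMinOn hKne hfc.continuousOn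
    obtain ⟨pL, hpLm, hpLmin⟩ := hL.exists_isMinOn hLne hfc.continuousOn
    set δK := |pK.1 - pK.2.1| with hδKdef
    set δL := |pL.1 - pL.2.1| with hδLdef
    have hδK : 0 < δK := by
      have hne : pK.1 ≠ pK.2.1 := by have := hKΩ hpKm; rw [hΩ] at this; exact this
      exact abs_pos.2 (sub_ne_zero.2 hne)
    have hδL : 0 < δL := by
      have hne : pL.1 ≠ pL.2.1 := by have := hLΩ hpLm; rw [hΩ] at this; exact this
      exact abs_pos.2 (sub_ne_zero.2 hne)
    have hδKle : ∀ p ∈ K, δK ≤ |p.1 - p.2.1| := fun p hp => isMinOn_iff.1 hpKmin p hp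
    have hδLle : ∀ p ∈ L, δL ≤ |p.1 - p.2.1| := fun p hp => isMinOn_iff.1 hpLmin p hp
    -- the discreteness constant
    have h0S : ((0:ℝ), (0:ℝ)) ∈ {q : ℝ × ℝ | ∃ γ : G, k γ = 0 ∧ q = (a γ, b γ)} :=
      ⟨1, hk1, by rw [ha1, hb1]⟩
    obtain ⟨ε, hε, hεsep⟩ := hdisc ((0:ℝ), (0:ℝ)) h0S
    have hsep : ∀ q ∈ {q : ℝ × ℝ | ∃ γ : G, k γ = 0 ∧ q = (a γ, b γ)},
        ∀ q' ∈ {q : ℝ × ℝ | ∃ γ : G, k γ = 0 ∧ q = (a γ, b γ)}, dist q q' < ε → q = q' := by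
      rintro q ⟨γ, hγ, rfl⟩ q' ⟨γ', hγ', rfl⟩ hd
      have hkd : k (γ * γ'⁻¹) = 0 := by rw [hk, hkinv]; omega
      have had : a (γ * γ'⁻¹) = a γ - a γ' := by
        rw [ha, hainv, hγ, hγ']; simp only [zpow_zero, neg_zero, one_mul]; ring
      have hbd : b (γ * γ'⁻¹) = b γ - b γ' := by
        rw [hb, hbinv, hγ, hγ']; simp only [zpow_zero, neg_zero, one_mul]; ring
      have hmem : ((a (γ * γ'⁻¹), b (γ * γ'⁻¹)) : ℝ × ℝ) ∈
          {q : ℝ × ℝ | ∃ γ : G, k γ = 0 ∧ q = (a γ, b γ)} := ⟨_, hkd, rfl⟩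
      have hdist : dist ((a (γ * γ'⁻¹), b (γ * γ'⁻¹)) : ℝ × ℝ) ((0:ℝ), (0:ℝ)) < ε := by
        rw [had, hbd]
        have hde : dist ((a γ - a γ', b γ - b γ') : ℝ × ℝ) ((0:ℝ), (0:ℝ)) =
            dist ((a γ, b γ) : ℝ × ℝ) ((a γ', b γ') : ℝ × ℝ) := by
          simp [Prod.dist_eq, Real.dist_eq, Prod.norm_def, Real.norm_eq_abs]
        rw [hde]; exact hd
      have heq := hεsep _ hmem hdist
      rw [had, hbd, Prod.mk.injEq] at heq
      have h1 : a γ = a γ' := by linarith [heq.1]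
      have h2 : b γ = b γ' := by linarith [heq.2]
      rw [h1, h2]
    -- constants
    set c₁ := δL / (2 * MK + 1) with hc₁
    set c₂ := (2 * ML + 1) / δK with hc₂
    have hc₁pos : 0 < c₁ := div_pos hδL (by linarith)
    have hc₂pos : 0 < c₂ := div_pos (by linarith) hδK
    set A := ML + c₂ * MK with hAdef
    set B := ML + MK / c₁ with hBdef
    -- the key estimates for elements moving K into L
    have key : ∀ γ ∈ {γ : G | (act γ '' K ∩ L).Nonempty},
        (c₁ ≤ l ^ (k γ) ∧ l ^ (k γ) ≤ c₂) ∧ |a γ| ≤ A ∧ |b γ| ≤ B := by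
      intro γ hγ
      obtain ⟨q, ⟨p, hpK, hpq⟩, hqL⟩ := hγ
      have hq : q = (l ^ (k γ) * p.1 + a γ, l ^ (k γ) * p.2.1 + a γ,
          l ^ (-(k γ)) * p.2.2 + b γ) := by
        rw [← hpq]; exact hact γ p.1 p.2.1 p.2.2
      obtain ⟨hp1, hp2, hp3⟩ := hKb p hpK
      obtain ⟨hq1, hq2, hq3⟩ := hLb q hqL
      have hqd : δL ≤ |q.1 - q.2.1| := hδLle q hqL
      have hpd : δK ≤ |p.1 - p.2.1| := hδKle p hpK
      have hqdu : |q.1 - q.2.1| ≤ 2 * ML := by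
        calc |q.1 - q.2.1| ≤ |q.1| + |q.2.1| := abs_sub _ _
          _ ≤ 2 * ML := by linarith
      have hpdu : |p.1 - p.2.1| ≤ 2 * MK := by
        calc |p.1 - p.2.1| ≤ |p.1| + |p.2.1| := abs_sub _ _
          _ ≤ 2 * MK := by linarith
      have hqe : q.1 - q.2.1 = l ^ (k γ) * (p.1 - p.2.1) := by rw [hq]; dsimp only; ring
      have habs : |q.1 - q.2.1| = l ^ (k γ) * |p.1 - p.2.1| := by
        rw [hqe, abs_mul, abs_of_pos (hz _)]
      have hlow : c₁ ≤ l ^ (k γ) := by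
        rw [hc₁, div_le_iff₀ (by linarith : (0:ℝ) < 2 * MK + 1)]
        have h5 : l ^ (k γ) * |p.1 - p.2.1| ≤ l ^ (k γ) * (2 * MK + 1) :=
          mul_le_mul_of_nonneg_left (by linarith) (hz (k γ)).le
        linarith
      have hhigh : l ^ (k γ) ≤ c₂ := by
        rw [hc₂, le_div_iff₀ hδK]
        have h5 : l ^ (k γ) * δK ≤ l ^ (k γ) * |p.1 - p.2.1| :=
          mul_le_mul_of_nonneg_left hpd (hz (k γ)).le
        linarith
      refine ⟨⟨hlow, hhigh⟩, ?_, ?_⟩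
      · have ha_eq : a γ = q.1 - l ^ (k γ) * p.1 := by
          have h6 : q.1 = l ^ (k γ) * p.1 + a γ := congrArg Prod.fst hq
          linarith
        have h7 : |a γ| ≤ |q.1| + l ^ (k γ) * |p.1| := by
          rw [ha_eq]
          calc |q.1 - l ^ (k γ) * p.1| ≤ |q.1| + |l ^ (k γ) * p.1| := abs_sub _ _
            _ = |q.1| + l ^ (k γ) * |p.1| := by rw [abs_mul, abs_of_pos (hz _)]
        have h8 : l ^ (k γ) * |p.1| ≤ c₂ * MK :=
          mul_le_mul hhigh hp1 (abs_nonneg _) hc₂pos.le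
        rw [hAdef]; linarith
      · have hb_eq : b γ = q.2.2 - l ^ (-(k γ)) * p.2.2 := by
          have h6 : q.2.2 = l ^ (-(k γ)) * p.2.2 + b γ := congrArg (fun r => r.2.2) hq
          linarith
        have hinvle : l ^ (-(k γ)) ≤ 1 / c₁ := by
          rw [zpow_neg, ← one_div]
          exact one_div_le_one_div_of_le hc₁pos hlow
        have h7 : |b γ| ≤ |q.2.2| + l ^ (-(k γ)) * |p.2.2| := by
          rw [hb_eq]
          calc |q.2.2 - l ^ (-(k γ)) * p.2.2| ≤ |q.2.2| + |l ^ (-(k γ)) * p.2.2| := abs_sub _ _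
            _ = |q.2.2| + l ^ (-(k γ)) * |p.2.2| := by rw [abs_mul, abs_of_pos (hz _)]
        have h8 : l ^ (-(k γ)) * |p.2.2| ≤ (1 / c₁) * MK :=
          mul_le_mul hinvle hp3 (abs_nonneg _) (by positivity)
        have h9 : (1 / c₁) * MK = MK / c₁ := by ring
        rw [hBdef]; linarith
    -- bounding the exponent
    obtain ⟨N, hN⟩ := pow_unbounded_of_one_lt c₂ hl
    obtain ⟨M, hM⟩ := pow_unbounded_of_one_lt (1 / c₁) hl
    have hkrange : ∀ γ ∈ {γ : G | (act γ '' K ∩ L).Nonempty},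
        k γ ∈ Finset.Icc (-(M:ℤ)) (N:ℤ) := by
      intro γ hγ
      obtain ⟨⟨h1, h2⟩, -, -⟩ := key γ hγ
      refine Finset.mem_Icc.2 ⟨?_, ?_⟩
      · by_contra hcon
        push_neg at hcon
        have h3 : l ^ (k γ) < l ^ (-(M:ℤ)) := zpow_lt_zpow_right₀ hl hcon
        have h4 : l ^ (-(M:ℤ)) = 1 / l ^ (M:ℕ) := by
          rw [zpow_neg, zpow_natCast, one_div]
        have h5 : 1 < l ^ (M:ℕ) * c₁ := by
          have := (div_lt_iff₀ hc₁pos).1 hM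
          linarith
        have h6 : 1 / l ^ (M:ℕ) < c₁ := by
          rw [div_lt_iff₀ (pow_pos hl0 M)]
          nlinarith
        rw [h4] at h3
        linarith
      · by_contra hcon
        push_neg at hcon
        have h3 : l ^ ((N:ℤ)) < l ^ (k γ) := zpow_lt_zpow_right₀ hl (by exact_mod_cast hcon)
        rw [zpow_natCast] at h3
        linarith
    -- cover by finitely many exponents
    have hcover : {γ : G | (act γ '' K ∩ L).Nonempty} ⊆
        ⋃ n ∈ Finset.Icc (-(M:ℤ)) (N:ℤ), {γ : G | (act γ '' K ∩ L).Nonempty ∧ k γ = n} :=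
      fun γ hγ => Set.mem_iUnion₂.2 ⟨k γ, hkrange γ hγ, hγ, rfl⟩
    refine Set.Finite.subset
      (Set.Finite.biUnion (Finset.Icc (-(M:ℤ)) (N:ℤ)).finite_toSet fun n _ => ?_) hcover
    -- each slice with fixed exponent is finite
    rcases Set.eq_empty_or_nonempty {γ : G | (act γ '' K ∩ L).Nonempty ∧ k γ = n} with he | hne
    · rw [he]; exact Set.finite_empty
    obtain ⟨γ0, hγ0Γ, hγ0k⟩ := hne
    set φ : G → ℝ × ℝ := fun γ => (l ^ (-n) * (a γ - a γ0), l ^ n * (b γ - b γ0)) with hφ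
    set R := l ^ (-n) * (2 * A) + l ^ n * (2 * B) with hRdef
    have hφmem : ∀ γ ∈ {γ : G | (act γ '' K ∩ L).Nonempty ∧ k γ = n},
        φ γ ∈ {q : ℝ × ℝ | ∃ γ : G, k γ = 0 ∧ q = (a γ, b γ)} ∩ Metric.closedBall 0 R := by
      rintro γ ⟨hγΓ, hγk⟩
      constructor
      · refine ⟨γ0⁻¹ * γ, ?_, ?_⟩
        · rw [hk, hkinv]; omega
        · have hae : a (γ0⁻¹ * γ) = l ^ (-n) * (a γ - a γ0) := by
            rw [ha, hainv, hkinv, hγ0k]; ring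
          have hbe : b (γ0⁻¹ * γ) = l ^ n * (b γ - b γ0) := by
            rw [hb, hbinv, hkinv, hγ0k, neg_neg]; ring
          rw [hφ, hae, hbe]
      · obtain ⟨-, haγ, hbγ⟩ := key γ hγΓ
        obtain ⟨-, haγ0, hbγ0⟩ := key γ0 hγ0Γ
        rw [mem_closedBall_zero_iff, Prod.norm_def]
        have hz1 : (0:ℝ) < l ^ (-n) := hz _
        have hz2 : (0:ℝ) < l ^ n := hz _
        have hA0 : 0 ≤ A := le_trans (abs_nonneg _) haγ
        have hB0 : 0 ≤ B := le_trans (abs_nonneg _) hbγ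
        apply max_le
        · simp only [Real.norm_eq_abs, hφ]
          rw [abs_mul, abs_of_pos hz1]
          have h11 : |a γ - a γ0| ≤ 2 * A := by
            calc |a γ - a γ0| ≤ |a γ| + |a γ0| := abs_sub _ _
              _ ≤ 2 * A := by linarith
          have h12 : l ^ (-n) * |a γ - a γ0| ≤ l ^ (-n) * (2 * A) :=
            mul_le_mul_of_nonneg_left h11 hz1.le
          have h13 : 0 ≤ l ^ n * (2 * B) := mul_nonneg hz2.le (by linarith)
          rw [hRdef]
          linarith
        · simp only [Real.norm_eq_abs, hφ]
          rw [abs_mul, abs_of_pos hz2]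
          have h11 : |b γ - b γ0| ≤ 2 * B := by
            calc |b γ - b γ0| ≤ |b γ| + |b γ0| := abs_sub _ _
              _ ≤ 2 * B := by linarith
          have h12 : l ^ n * |b γ - b γ0| ≤ l ^ n * (2 * B) :=
            mul_le_mul_of_nonneg_left h11 hz2.le
          have h13 : 0 ≤ l ^ (-n) * (2 * A) := mul_nonneg hz1.le (by linarith)
          rw [hRdef]
          linarith
    have hφinj : Set.InjOn φ {γ : G | (act γ '' K ∩ L).Nonempty ∧ k γ = n} := by
      rintro γ ⟨-, hγk⟩ γ' ⟨-, hγ'k⟩ heq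
      rw [hφ, Prod.mk.injEq] at heq
      have ha' : a γ = a γ' := by
        have := mul_left_cancel₀ (hz (-n)).ne' heq.1
        linarith
      have hb' : b γ = b γ' := by
        have := mul_left_cancel₀ (hz n).ne' heq.2
        linarith
      exact hinj γ γ' (hγk.trans hγ'k.symm) ha' hb'
    have hfin := sep_inter_closedBall_finite hε hsep R
    refine Set.Finite.of_finite_image (hfin.subset ?_) hφinj
    rintro q ⟨γ, hγ, rfl⟩
    exact hφmem γ hγ
end

section
/- Let λ > 1 be a real number and let L : ℝ² → ℝ² be the linear map L(x, y) = (λx, λ⁻¹y). Let v, w ∈ ℝ², not both zero, and let H := { m·v + n·w : m, n ∈ ℤ } be the additive subgroup of ℝ² generated by v and w. Assume L(H) ⊆ H, and assume that every nonzero element (p, q) ∈ H satisfies p ≠ 0 and q ≠ 0. Then v and w are linearly independent over ℝ. -/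
/-- If the subgroup of `ℝ²` generated by `v` and `w` (not both zero) is
invariant under `L(x,y) = (λx, λ⁻¹y)` with `λ > 1`, and every nonzero element of the
subgroup has both coordinates nonzero, then `v` and `w` are linearly independent over `ℝ`. -/
theorem lattice_generators_linearly_independent
    (l : ℝ) (hl : 1 < l)
    (v w : ℝ × ℝ) (hvw : ¬(v = 0 ∧ w = 0))
    (H : Set (ℝ × ℝ))
    (hH : H = {p : ℝ × ℝ | ∃ m n : ℤ, p = m • v + n • w})
    (hL : ∀ p ∈ H, (l * p.1, l⁻¹ * p.2) ∈ H)
    (hcoord : ∀ p ∈ H, p ≠ 0 → p.1 ≠ 0 ∧ p.2 ≠ 0) :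
    ∀ s t : ℝ, s • v + t • w = 0 → s = 0 ∧ t = 0 := by
  have hl0 : l ≠ 0 := by positivity
  -- key: no nonzero element of H can be an eigenvector of L
  have key : ∀ u ∈ H, u ≠ 0 → ∀ c : ℝ, ((l * u.1, l⁻¹ * u.2) : ℝ × ℝ) = c • u → False := by
    intro u hu hne c hc
    obtain ⟨h1, h2⟩ := hcoord u hu hne
    rw [Prod.ext_iff] at hc
    have e1 : l * u.1 = c * u.1 := by simpa using hc.1
    have e2 : l⁻¹ * u.2 = c * u.2 := by simpa using hc.2
    have hc1 : l = c := mul_right_cancel₀ h1 e1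
    have hc2 : l⁻¹ = c := mul_right_cancel₀ h2 e2
    have h3 : l⁻¹ = l := hc2.trans hc1.symm
    have hll : l * l = 1 := by
      nth_rewrite 2 [← h3]
      exact mul_inv_cancel₀ hl0
    nlinarith
  intro s t h
  by_cases hs : s = 0
  · subst hs
    constructor
    · rfl
    · by_contra ht
      have hw0 : w = 0 := by
        have : t • w = 0 := by simpa using h
        rcases smul_eq_zero.mp this with h' | h'
        · exact absurd h' ht
        · exact h'
      have hv0 : v ≠ 0 := fun hv => hvw ⟨hv, hw0⟩
      have hvH : v ∈ H := by
        rw [hH]; exact ⟨1, 0, by simp⟩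
      have := hL v hvH
      rw [hH] at this
      obtain ⟨m, n, hmn⟩ := this
      exact key v hvH hv0 (m : ℝ) (by
        rw [hmn, hw0, smul_zero, add_zero]
        exact (Int.cast_smul_eq_zsmul ℝ m v).symm)
  · exfalso
    have hw0 : w ≠ 0 := by
      intro hw
      apply hvw
      refine ⟨?_, hw⟩
      have : s • v = 0 := by simpa [hw] using h
      rcases smul_eq_zero.mp this with h' | h'
      · exact absurd h' hs
      · exact h'
    have hv : v = (-(t / s)) • w := by
      have : s • v = -(t • w) := by
        rw [eq_neg_iff_add_eq_zero]; exact h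
      have := congrArg (fun x => s⁻¹ • x) this
      simp only [smul_smul, inv_mul_cancel₀ hs, one_smul] at this
      rw [this]
      rw [smul_neg, smul_smul, ← neg_smul]
      congr 1
      ring
    have hwH : w ∈ H := by
      rw [hH]; exact ⟨0, 1, by simp⟩
    have := hL w hwH
    rw [hH] at this
    obtain ⟨m, n, hmn⟩ := this
    exact key w hwH hw0 ((m : ℝ) * (-(t / s)) + n) (by
      rw [hmn, hv, add_smul, ← smul_smul]
      simp only [← Int.cast_smul_eq_zsmul ℝ])
end

section
/- Let δ : ℝ → ℝ be a strictly increasing homeomorphism with δ(x) > x for all x ∈ ℝ. Let G be a group, ρ : G → Homeo(ℝ) an action of G on ℝ by strictly increasing homeomorphisms each of which commutes with δ, and h : G → ℤ a map with h(γγ′) = h(γ) + h(γ′) for all γ, γ′ ∈ G. Suppose γ ∈ G and (x, y) ∈ ℝ² is a fixed point of the action of γ on ℝ² given by γ·(u, v) = (ρ(γ)(u), ρ(γ)(δ^{h(γ)}(v))), i.e. ρ(γ)(x) = x and ρ(γ)(δ^{h(γ)}(y)) = y, and suppose (x, y) lies on none of the graphs of the iterates of δ, i.e. y ≠ δᵏ(x)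 for every k ∈ ℤ. Then h(γ) = 0; consequently γ acts on ℝ² as the diagonal homeomorphism (u, v) ↦ (ρ(γ)(u), ρ(γ)(v)). -/
/-!
Since `ρ γ` fixes `x` and commutes with `δ`, it fixes every point `δᵏ x` of the `δ`-orbit of `x`,
and being increasing it preserves each gap `(δᵏ x, δᵏ⁺¹ x)` between consecutive orbit points.
A point `y` off the graphs of the iterates lies in exactly one such gap. The fixed-point equation
gives `y = δⁿ (ρ γ y)` with `n = h γ`, and `δⁿ` carries the gap of `y` to the gap `n` steps
further, so `n = 0`. The gaps cover `ℝ` because the orbit is unbounded in both directions: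
a bounded increasing orbit of a continuous `δ` would converge to a fixed point of `δ`.
-/

open Filter Set

theorem exists_lt_iterate_of_lt_self {α : Type*} [ConditionallyCompleteLinearOrder α]
    [TopologicalSpace α] [OrderTopology α] {f : α → α} (hf : Continuous f)
    (hlt : ∀ z, z < f z) (z w : α) : ∃ m : ℕ, z < f^[m] w := by
  by_contra! hbdd
  have hmono : Monotone fun m => f^[m] w := monotone_nat_of_le_succ fun m => by
    rw [Function.iterate_succ_apply']
    exact (hlt _).le
  have hfix := isFixedPt_of_tendsto_iterate
    (tendsto_atTop_ciSup hmono ⟨z, forall_mem_range.2 hbdd⟩) hf.continuousAt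
  exact (hlt _).ne' hfix

theorem Int.exists_le_lt_succ_of_monotone {α : Type*} [LinearOrder α] {f : ℤ → α}
    (hf : Monotone f) {y : α} (hlo : ∃ k, f k ≤ y) (hhi : ∃ k, y < f k) :
    ∃ k, f k ≤ y ∧ y < f (k + 1) := by
  obtain ⟨b, hb⟩ := hhi
  have hbdd : ∀ j, f j ≤ y → j ≤ b := fun j hj =>
    le_of_lt <| hf.reflect_lt (hj.trans_lt hb)
  obtain ⟨k, hk, hmax⟩ := Int.exists_greatest_of_bdd ⟨b, hbdd⟩ hlo
  exact ⟨k, hk, lt_of_not_ge fun h => by linarith [hmax _ h]⟩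

theorem StrictMono.eq_of_mem_Ioo_succ {α : Type*} [Preorder α] {f : ℤ → α} (hf : StrictMono f)
    {j k : ℤ} {y : α} (hj : y ∈ Ioo (f j) (f (j + 1))) (hk : y ∈ Ioo (f k) (f (k + 1))) :
    j = k := by
  have := hf.lt_iff_lt.1 (hj.1.trans hk.2)
  have := hf.lt_iff_lt.1 (hk.1.trans hj.2)
  omega

namespace Equiv.Perm

variable {α : Type*}

theorem zpow_apply_zpow_apply (δ : Perm α) (m n : ℤ) (x : α) :
    (δ ^ m) ((δ ^ n) x) = (δ ^ (m + n)) x := by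
  rw [zpow_add, mul_apply]

variable [LinearOrder α] {δ φ : Perm α}

theorem strictMono_zpow (hδ : StrictMono δ) (n : ℤ) : StrictMono ⇑(δ ^ n) := by
  have hinv : StrictMono ⇑δ⁻¹ := fun a b hab => by
    rwa [← hδ.lt_iff_lt, coe_inv, apply_symm_apply, apply_symm_apply]
  induction n using Int.induction_on with
  | zero => exact strictMono_id
  | succ n ih => rw [zpow_add_one, coe_mul]; exact ih.comp hδ
  | pred n ih => rw [zpow_sub_one, coe_mul]; exact ih.comp hinv

theorem strictMono_zpow_apply (hδ : StrictMono δ) (hlt : ∀ z, z < δ z) (x : α) :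
    StrictMono fun k : ℤ => (δ ^ k) x :=
  strictMono_int_of_lt_succ fun k => by
    rw [zpow_add_one, mul_apply]
    exact strictMono_zpow hδ k (hlt x)

theorem zpow_apply_mem_Ioo_orbit (hδ : StrictMono δ) {x y : α} {n k : ℤ}
    (hy : y ∈ Ioo ((δ ^ k) x) ((δ ^ (k + 1)) x)) :
    (δ ^ n) y ∈ Ioo ((δ ^ (n + k)) x) ((δ ^ (n + (k + 1))) x) := by
  rw [← zpow_apply_zpow_apply, ← zpow_apply_zpow_apply]
  exact ⟨strictMono_zpow hδ n hy.1, strictMono_zpow hδ n hy.2⟩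

theorem mapsTo_Ioo_orbit (hφ : StrictMono φ) (hc : Commute δ φ) {x : α} (hx : φ x = x) (k : ℤ) :
    MapsTo φ (Ioo ((δ ^ k) x) ((δ ^ (k + 1)) x)) (Ioo ((δ ^ k) x) ((δ ^ (k + 1)) x)) := by
  have hfix : ∀ j : ℤ, φ ((δ ^ j) x) = (δ ^ j) x := fun j => by
    rw [← mul_apply, ← (hc.zpow_left j).eq, mul_apply, hx]
  intro y hy
  rw [mem_Ioo, ← hfix k, ← hfix (k + 1)]
  exact ⟨hφ hy.1, hφ hy.2⟩

theorem eq_zero_of_apply_zpow_apply_eq (hδ : StrictMono δ) (hlt : ∀ z, z < δ z)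
    (hφ : StrictMono φ) (hc : Commute δ φ) {x y : α} {n k : ℤ} (hx : φ x = x)
    (hy : φ ((δ ^ n) y) = y) (hk : y ∈ Ioo ((δ ^ k) x) ((δ ^ (k + 1)) x)) : n = 0 := by
  have hy' : (δ ^ n) (φ y) = y := by
    rw [← mul_apply, (hc.zpow_left n).eq, mul_apply, hy]
  have hshift := zpow_apply_mem_Ioo_orbit hδ (n := n) (mapsTo_Ioo_orbit hφ hc hx k hk)
  rw [hy', ← add_assoc] at hshift
  have := (strictMono_zpow_apply hδ hlt x).eq_of_mem_Ioo_succ hshift hk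
  omega

end Equiv.Perm

open Equiv.Perm in
theorem Homeomorph.exists_mem_Ioo_zpow_orbit {α : Type*} [ConditionallyCompleteLinearOrder α]
    [TopologicalSpace α] [OrderTopology α] (δ : α ≃ₜ α) (hδ : StrictMono δ)
    (hlt : ∀ z, z < δ z) {x y : α} (hoff : ∀ k : ℤ, y ≠ (δ.toEquiv ^ k) x) :
    ∃ k : ℤ, y ∈ Ioo ((δ.toEquiv ^ k) x) ((δ.toEquiv ^ (k + 1)) x) := by
  have hiter (m : ℕ) : (⇑δ)^[m] = ⇑(δ.toEquiv ^ (m : ℤ)) := by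
    rw [zpow_natCast]
    rfl
  obtain ⟨m, hm⟩ := exists_lt_iterate_of_lt_self δ.continuous hlt x y
  obtain ⟨m', hm'⟩ := exists_lt_iterate_of_lt_self δ.continuous hlt y x
  rw [hiter] at hm hm'
  have hlo : (δ.toEquiv ^ (-(m : ℤ))) x < y := by
    have := strictMono_zpow (δ := δ.toEquiv) hδ (-m) hm
    rwa [zpow_apply_zpow_apply, neg_add_cancel, zpow_zero, Equiv.Perm.one_apply] at this
  obtain ⟨k, hk₁, hk₂⟩ := Int.exists_le_lt_succ_of_monotone
    (strictMono_zpow_apply (δ := δ.toEquiv) hδ hlt x).monotone ⟨_, hlo.le⟩ ⟨m', hm'⟩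
  exact ⟨k, lt_of_le_of_ne hk₁ (hoff k).symm, hk₂⟩

theorem fixed_point_off_graphs_implies_diagonal_general
    {G : Type*}
    (δ : ℝ ≃ₜ ℝ) (hδmono : StrictMono δ) (hδ : ∀ x : ℝ, x < δ x)
    (ρ : G → ℝ ≃ₜ ℝ)
    (hρmono : ∀ γ : G, StrictMono (ρ γ))
    (hcomm : ∀ (γ : G) (x : ℝ), ρ γ (δ x) = δ (ρ γ x))
    (h : G → ℤ)
    (γ : G) (x y : ℝ)
    (hfix₁ : ρ γ x = x)
    (hfix₂ : ρ γ ((δ.toEquiv ^ (h γ)) y) = y)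
    (hoff : ∀ k : ℤ, y ≠ (δ.toEquiv ^ k) x) :
    h γ = 0 ∧ ∀ u v : ℝ, (ρ γ u, ρ γ ((δ.toEquiv ^ (h γ)) v)) = (ρ γ u, ρ γ v) := by
  have hc : Commute δ.toEquiv (ρ γ).toEquiv := Equiv.ext fun z => (hcomm γ z).symm
  obtain ⟨k, hk⟩ := δ.exists_mem_Ioo_zpow_orbit hδmono hδ hoff
  have h0 : h γ = 0 :=
    Equiv.Perm.eq_zero_of_apply_zpow_apply_eq hδmono hδ (hρmono γ) hc hfix₁ hfix₂ hk
  exact ⟨h0, fun u v => by rw [h0, zpow_zero, Equiv.Perm.one_apply]⟩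

/-- A fixed point of `γ·(u,v) = (ρ γ u, ρ γ (δ^{h γ} v))` lying on no graph of
an iterate of `δ` forces `h(γ) = 0`, so `γ` acts diagonally. -/
theorem fixed_point_off_graphs_implies_diagonal
    {G : Type*} [Group G]
    (δ : ℝ ≃ₜ ℝ) (hδmono : StrictMono δ) (hδ : ∀ x : ℝ, x < δ x)
    (ρ : G → ℝ ≃ₜ ℝ)
    (hρ : ∀ γ γ' : G, ∀ x : ℝ, ρ (γ * γ') x = ρ γ (ρ γ' x))
    (hρmono : ∀ γ : G, StrictMono (ρ γ))
    (hcomm : ∀ (γ : G) (x : ℝ), ρ γ (δ x) = δ (ρ γ x))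
    (h : G → ℤ) (hh : ∀ γ γ' : G, h (γ * γ') = h γ + h γ')
    (γ : G) (x y : ℝ)
    (hfix₁ : ρ γ x = x)
    (hfix₂ : ρ γ ((δ.toEquiv ^ (h γ)) y) = y)
    (hoff : ∀ k : ℤ, y ≠ (δ.toEquiv ^ k) x) :
    h γ = 0 ∧ ∀ u v : ℝ, (ρ γ u, ρ γ ((δ.toEquiv ^ (h γ)) v)) = (ρ γ u, ρ γ v) :=
  fixed_point_off_graphs_implies_diagonal_general δ hδmono hδ ρ hρmono hcomm h γ x y hfix₁ hfix₂
    hoff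
end
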